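/- arXiv:1910.13546 — 8 statements merged into one kernel-verified Lean document; each statement's English description precedes it below -/
import Mathlib

section
/- Let G be a graph on n vertices and let S = Σ_{u} C(d_G(u), 2) be the number of paths of length 2 (cherries) in G. Then 3·T(G) ≤ S ≤ C(n,3) + 2·T(G), where T(G) is the number of triangles in G. -/
/-!
A cherry with centre `u` and leaves `s` spans the 3-set `insert u s`, in which `u` is adjacent
to both other vertices. So `S` counts pairs (3-set, vertex of it adjacent to the other two).
A triangle contributes 3 such vertices; any other 3-set contributes at most one, because two of
them already force all three edges. Summing over the `C(n,3)` 3-sets gives both bounds.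
-/

open scoped Classical

open Finset

namespace SimpleGraph

variable {V : Type*} [Fintype V] (G : SimpleGraph V)

noncomputable def universalIn (t : Finset V) : Finset V :=
  {u ∈ t | t.erase u ⊆ G.neighborFinset u}

variable {G}

theorem universalIn_eq_self_of_isClique {t : Finset V} (ht : G.IsClique (t : Set V)) :
    G.universalIn t = t := by
  refine filter_true_of_mem fun u hu w hw => ?_
  obtain ⟨hwu, hwt⟩ := mem_erase.mp hw
  exact (G.mem_neighborFinset u w).mpr (ht hu hwt hwu.symm)

theorem isClique_of_one_lt_card_universalIn {t : Finset V} (ht : #t ≤ 3)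
    (h : 1 < #(G.universalIn t)) : G.IsClique (t : Set V) := by
  obtain ⟨u, hu, v, hv, huv⟩ := one_lt_card.mp h
  simp only [universalIn, mem_filter] at hu hv
  have adj_of_universal {x : V} (hx : x ∈ t ∧ t.erase x ⊆ G.neighborFinset x) {y : V}
      (hy : y ∈ t) (hxy : x ≠ y) : G.Adj x y :=
    (G.mem_neighborFinset x y).mp (hx.2 (mem_erase.mpr ⟨hxy.symm, hy⟩))
  intro a ha b hb hab
  by_cases hau : a = u; · exact hau ▸ adj_of_universal hu hb (hau ▸ hab)
  by_cases hbu : b = u; · exact hbu ▸ (adj_of_universal hu ha (hbu ▸ hab.symm)).symm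
  by_cases hav : a = v; · exact hav ▸ adj_of_universal hv hb (hav ▸ hab)
  by_cases hbv : b = v; · exact hbv ▸ (adj_of_universal hv ha (hbv ▸ hab.symm)).symm
  -- otherwise `u, v, a, b` would be four distinct vertices of `t`
  have hsub : ({u, v, a, b} : Finset V) ⊆ t := by
    simp only [insert_subset_iff, singleton_subset_iff]
    exact ⟨hu.1, hv.1, ha, hb⟩
  have := card_le_card hsub
  rw [card_insert_of_notMem (by simp [huv, Ne.symm hau, Ne.symm hbu]),
    card_insert_of_notMem (by simp [Ne.symm hav, Ne.symm hbv]),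
    card_pair hab] at this
  omega

theorem sum_degree_choose_eq_sum_card_universalIn (k : ℕ) :
    ∑ u : V, (G.degree u).choose k =
      ∑ t ∈ (univ : Finset V).powersetCard (k + 1), #(G.universalIn t) := by
  rw [← card_sigma]
  simp only [← card_neighborFinset_eq_degree, ← card_powersetCard]
  rw [← card_sigma]
  refine card_nbij' (fun p => ⟨insert p.1 p.2, p.1⟩) (fun q => ⟨q.2, q.1.erase q.2⟩)
    ?_ ?_ ?_ ?_
  · rintro ⟨u, s⟩ hp
    simp only [coe_sigma, Set.mem_sigma_iff, mem_coe, mem_univ, mem_powersetCard, true_and,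
      subset_univ] at hp ⊢
    have hus : u ∉ s := fun h => G.notMem_neighborFinset_self u (hp.1 h)
    refine ⟨by rw [card_insert_of_notMem hus, hp.2], ?_⟩
    simpa [universalIn, erase_insert hus] using hp.1
  · rintro ⟨t, u⟩ hq
    simp only [coe_sigma, Set.mem_sigma_iff, mem_coe, mem_univ, mem_powersetCard, true_and,
      subset_univ, universalIn, mem_filter] at hq ⊢
    exact ⟨hq.2.2, by rw [card_erase_of_mem hq.2.1, hq.1]; rfl⟩
  · rintro ⟨u, s⟩ hp
    simp only [coe_sigma, Set.mem_sigma_iff, mem_coe, mem_univ, mem_powersetCard, true_and] at hp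
    have hus : u ∉ s := fun h => G.notMem_neighborFinset_self u (hp.1 h)
    simp [erase_insert hus]
  · rintro ⟨t, u⟩ hq
    simp only [coe_sigma, Set.mem_sigma_iff, mem_coe, universalIn, mem_filter] at hq
    simp [insert_erase hq.2.1]

end SimpleGraph

/-- For a graph `G` on `n` vertices, with `S = Σ_u C(d_G(u), 2)` the number of cherries,
we have `3·T(G) ≤ S ≤ C(n,3) + 2·T(G)`, where `T(G)` is the number of triangles. -/
theorem stmt_2 {V : Type*} [Fintype V] (G : SimpleGraph V) :
    3 * (G.cliqueFinset 3).card ≤ ∑ u : V, (G.degree u).choose 2 ∧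
      ∑ u : V, (G.degree u).choose 2 ≤
        (Fintype.card V).choose 3 + 2 * (G.cliqueFinset 3).card := by
  set A := (univ : Finset V).powersetCard 3
  have hTA : G.cliqueFinset 3 ⊆ A := fun t ht =>
    mem_powersetCard.mpr ⟨subset_univ t, (G.mem_cliqueFinset_iff.mp ht).2⟩
  have on_triangles : ∑ t ∈ G.cliqueFinset 3, #(G.universalIn t) = 3 * #(G.cliqueFinset 3) := by
    rw [sum_const_nat fun t ht => ?_, mul_comm]
    obtain ⟨hclique, hcard⟩ := G.mem_cliqueFinset_iff.mp ht
    rw [G.universalIn_eq_self_of_isClique hclique, hcard]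
  have off_triangles : ∑ t ∈ A \ G.cliqueFinset 3, #(G.universalIn t) ≤
      #(A \ G.cliqueFinset 3) := by
    refine (sum_le_card_nsmul _ _ 1 fun t ht => ?_).trans (by simp)
    obtain ⟨htA, hnot⟩ := mem_sdiff.mp ht
    have hcard := (mem_powersetCard.mp htA).2
    by_contra! h
    exact hnot <| G.mem_cliqueFinset_iff.mpr
      ⟨G.isClique_of_one_lt_card_universalIn hcard.le h, hcard⟩
  have hA : #A = (Fintype.card V).choose 3 := by simp [A]
  have hcard := card_sdiff_add_card_eq_card hTA
  rw [G.sum_degree_choose_eq_sum_card_universalIn 2, ← sum_sdiff hTA, on_triangles]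
  omega
end

section
/- If the edges of K_n are partitioned into two graphs G and H, then Σ_u [C(d_G(u),2) + C(d_H(u),2)] = C(n,3) + 2·T(G) + 2·T(H), where T(·) counts triangles. -/
/-!
Call `u` the apex of a cherry of `G` in a vertex triple `s ∋ u` when both edges from `u` to the
other two vertices of `s` lie in `G`. Since every pair of vertices is joined in exactly one of
`G`, `H`, a triple spanning a triangle of `G` or of `H` has three apexes (all in the same graph)
and any other triple has exactly one. Counting the pairs (apex, triple) vertex by vertex gives the
left-hand side, triple by triple the right-hand side.
-/

open scoped Classical

open Finset

namespace SimpleGraph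

variable {V : Type*}

def IsCherryApex (G : SimpleGraph V) (s : Finset V) (u : V) : Prop :=
  ∀ v ∈ s, v ≠ u → G.Adj u v

theorem choose_degree_two_eq_card [Fintype V] (G : SimpleGraph V) (u : V) :
    (G.degree u).choose 2 = #{s ∈ powersetCard 3 univ | u ∈ s ∧ G.IsCherryApex s u} := by
  rw [← card_neighborFinset_eq_degree, ← card_powersetCard]
  refine card_nbij' (insert u) (·.erase u) (fun e he => ?_) (fun s hs => ?_)
    (fun e he => ?_) (fun s hs => insert_erase (mem_filter.1 (mem_coe.1 hs)).2.1)
  · rw [mem_coe, mem_powersetCard] at he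
    rw [mem_coe, mem_filter, mem_powersetCard_univ]
    have hu : u ∉ e := fun h => G.notMem_neighborFinset_self u (he.1 h)
    refine ⟨by rw [card_insert_of_notMem hu, he.2], mem_insert_self u e, fun v hv hvu => ?_⟩
    exact (G.mem_neighborFinset u v).1 (he.1 ((mem_insert.1 hv).resolve_left hvu))
  · rw [mem_coe, mem_filter, mem_powersetCard_univ] at hs
    rw [mem_coe, mem_powersetCard]
    refine ⟨fun v hv => ?_, by rw [card_erase_of_mem hs.2.1, hs.1]⟩
    obtain ⟨hvu, hv⟩ := mem_erase.1 hv
    exact (G.mem_neighborFinset u v).2 (hs.2.2 v hv hvu)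
  · rw [mem_coe, mem_powersetCard] at he
    exact erase_insert fun h => G.notMem_neighborFinset_self u (he.1 h)

theorem sum_choose_degree_two [Fintype V] (G : SimpleGraph V) :
    ∑ u, (G.degree u).choose 2 =
      ∑ s ∈ powersetCard 3 univ, #{u ∈ s | G.IsCherryApex s u} := by
  simp_rw [choose_degree_two_eq_card]
  refine (sum_card_bipartiteAbove_eq_sum_card_bipartiteBelow
    (r := fun u s => u ∈ s ∧ G.IsCherryApex s u)).trans (sum_congr rfl fun s _ => ?_)
  congr 1
  ext u
  simp [bipartiteBelow]

theorem card_cherryApex_add_card_cherryApex {G H : SimpleGraph V}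
    (hpart : ∀ u v : V, u ≠ v → (G.Adj u v ↔ ¬ H.Adj u v)) {s : Finset V} (hs : #s = 3) :
    #{u ∈ s | G.IsCherryApex s u} + #{u ∈ s | H.IsCherryApex s u} =
      1 + 2 * (if G.IsNClique 3 s then 1 else 0) + 2 * (if H.IsNClique 3 s then 1 else 0) := by
  obtain ⟨a, b, c, hab, hac, hbc, rfl⟩ := card_eq_three.1 hs
  have hH : ∀ x y : V, x ≠ y → (H.Adj x y ↔ ¬ G.Adj x y) := fun x y hxy => by
    rw [hpart x y hxy, not_not]
  have ha : a ∉ ({b, c} : Finset V) := by simp [hab, hac]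
  have hb : b ∉ ({c} : Finset V) := by simp [hbc]
  rw [card_filter, card_filter]
  simp only [sum_insert ha, sum_insert hb, sum_singleton]
  simp only [is3Clique_triple_iff, IsCherryApex, mem_insert, mem_singleton, forall_eq_or_imp,
    forall_eq, hH _ _ hab, hH _ _ hac, hH _ _ hbc, hH _ _ hab.symm, hH _ _ hac.symm,
    hH _ _ hbc.symm, G.adj_comm b a, G.adj_comm c a, G.adj_comm c b]
  by_cases h1 : G.Adj a b <;> by_cases h2 : G.Adj a c <;> by_cases h3 : G.Adj b c <;>
    simp [h1, h2, h3, hab, hac, hbc, hab.symm, hac.symm, hbc.symm]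

theorem filter_powersetCard_isNClique [Fintype V] (G : SimpleGraph V) (n : ℕ) :
    {s ∈ powersetCard n (univ : Finset V) | G.IsNClique n s} = G.cliqueFinset n := by
  ext s
  simp only [mem_filter, mem_powersetCard_univ, mem_cliqueFinset_iff, and_iff_right_iff_imp]
  exact fun h => h.card_eq

end SimpleGraph

open SimpleGraph in
/-- If the edges of `K_n` are partitioned into two graphs `G` and `H`, then
`Σ_u [C(d_G(u),2) + C(d_H(u),2)] = C(n,3) + 2·T(G) + 2·T(H)`. -/
theorem stmt_4 {V : Type*} [Fintype V] (G H : SimpleGraph V)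
    (hpart : ∀ u v : V, u ≠ v → (G.Adj u v ↔ ¬ H.Adj u v)) :
    ∑ u : V, ((G.degree u).choose 2 + (H.degree u).choose 2) =
      (Fintype.card V).choose 3 + 2 * (G.cliqueFinset 3).card
        + 2 * (H.cliqueFinset 3).card := by
  rw [sum_add_distrib, sum_choose_degree_two, sum_choose_degree_two, ← sum_add_distrib,
    sum_congr rfl fun s hs =>
      card_cherryApex_add_card_cherryApex hpart (mem_powersetCard_univ.1 hs)]
  simp only [sum_add_distrib, ← mul_sum, sum_boole, filter_powersetCard_isNClique, sum_const,
    card_powersetCard, card_univ, smul_eq_mul, mul_one, Nat.cast_id]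
end

section
/- For every ε with 0 < ε < 1/100 there exists n₀ such that for all n > n₀: if E(K_n) = E(G) ⊔ E(H) is any 2-coloring, then T(G) + T(H) ≥ (1/4 - ε)·C(n,3). -/
/-!
A triangle that is not monochromatic has exactly two vertices at which its two edges get
different colours. At a vertex `v` there are at most `d_G(v) · d_H(v) ≤ (n - 1)² / 4` such
triangles, so at most `n (n - 1)² / 8` triangles are not monochromatic. This is Goodman's
bound `T(G) + T(H) ≥ C(n,3)/4 - C(n,2)/4`, and `C(n,2) ≤ 4 ε C(n,3)` as soon as
`4 ε (n - 2) ≥ 3`.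
-/

open scoped Classical

open Finset

theorem Nat.six_mul_choose_three_add_two_mul_choose_two (n : ℕ) :
    6 * n.choose 3 + 2 * n.choose 2 = n * (n - 1) ^ 2 := by
  rcases n with _ | _ | m
  · rfl
  · rfl
  have h₃ := Nat.add_one_mul_choose_eq (m + 1) 2
  have h₂ := Nat.add_one_mul_choose_eq (m + 1) 1
  have h₁ := Nat.choose_succ_right_eq (m + 1) 1
  simp only [Nat.choose_one_right, Nat.add_sub_cancel] at h₁ h₂ h₃ ⊢
  nlinarith

namespace SimpleGraph

variable {V : Type*}

theorem eq_compl_of_adj_iff_not_adj {G H : SimpleGraph V}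
    (h : ∀ u v : V, u ≠ v → (G.Adj u v ↔ ¬ H.Adj u v)) : H = Gᶜ := by
  ext u v
  by_cases huv : u = v
  · simp [huv]
  · simp [compl_adj, huv, h u v huv]

def IsMixedIn (G : SimpleGraph V) (S : Finset V) (v : V) : Prop :=
  (∃ b ∈ S, G.Adj v b) ∧ ∃ c ∈ S, Gᶜ.Adj v c

theorem two_le_card_filter_isMixedIn {G : SimpleGraph V} {S : Finset V} (hS : #S = 3)
    (hG : ¬ G.IsNClique 3 S) (hGc : ¬ Gᶜ.IsNClique 3 S) :
    2 ≤ #(S.filter (G.IsMixedIn S)) := by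
  obtain ⟨a, b, c, hab, hac, hbc, rfl⟩ := card_eq_three.mp hS
  -- `a` is mixed iff `ab` and `ac` differ in colour, and likewise for `b` and `c`; unless all
  -- three edges agree, exactly two of these three pairs differ.
  rw [is3Clique_triple_iff] at hG hGc
  simp only [compl_adj, ne_eq, hab, hac, hbc, not_false_eq_true, true_and] at hGc
  by_cases h₁ : G.Adj a b <;> by_cases h₂ : G.Adj a c <;> by_cases h₃ : G.Adj b c <;>
    simp_all [IsMixedIn, filter_insert, filter_singleton, G.adj_comm, compl_adj, eq_comm]

variable [Fintype V]

theorem card_filter_isMixedIn_le (G : SimpleGraph V) (v : V) :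
    #((univ.powersetCard 3).filter (fun S => v ∈ S ∧ G.IsMixedIn S v)) ≤
      G.degree v * Gᶜ.degree v := by
  rw [← card_neighborFinset_eq_degree, ← card_neighborFinset_eq_degree, ← card_product]
  refine card_le_card_of_surjOn (fun p => {v, p.1, p.2}) ?_
  rintro S hS
  simp only [coe_filter, Set.mem_ofPred_eq, mem_powersetCard] at hS
  obtain ⟨⟨-, hS3⟩, hvS, ⟨b, hb, hvb⟩, c, hc, hvc⟩ := hS
  have hbc : b ≠ c := by rintro rfl; exact (compl_adj G v b).mp hvc |>.2 hvb
  refine ⟨(b, c), by simpa using ⟨hvb, hvc⟩, ?_⟩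
  refine eq_of_subset_of_card_le ?_ ?_
  · simp [insert_subset_iff, hvS, hb, hc]
  · rw [hS3, card_insert_of_notMem (by simp [hvb.ne, hvc.ne]), card_pair hbc]

theorem two_mul_choose_three_le_add_sum_degree_mul_degree_compl (G : SimpleGraph V) :
    2 * (Fintype.card V).choose 3 ≤
      2 * (#(G.cliqueFinset 3) + #(Gᶜ.cliqueFinset 3)) + ∑ v, G.degree v * Gᶜ.degree v := by
  set P := (univ : Finset V).powersetCard 3
  set M := P.filter (fun S => ¬ G.IsNClique 3 S ∧ ¬ Gᶜ.IsNClique 3 S)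
  have hP : #P ≤ #(G.cliqueFinset 3) + #(Gᶜ.cliqueFinset 3) + #M := by
    refine (card_le_card ?_).trans <|
      (card_union_le _ _).trans <| by gcongr; exact card_union_le _ _
    intro S hS
    simp only [mem_union, mem_cliqueFinset_iff, M, mem_filter]
    tauto
  have hM : 2 * #M ≤ ∑ v, G.degree v * Gᶜ.degree v := by
    calc 2 * #M = ∑ _S ∈ M, 2 := by rw [sum_const, smul_eq_mul, mul_comm]
      _ ≤ ∑ S ∈ M, #(univ.bipartiteAbove (fun S v => v ∈ S ∧ G.IsMixedIn S v) S) := by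
          refine sum_le_sum fun S hS => ?_
          obtain ⟨hSP, hG, hGc⟩ := mem_filter.mp hS
          refine (two_le_card_filter_isMixedIn (mem_powersetCard.mp hSP).2 hG hGc).trans_eq ?_
          congr 1
          ext x
          simp [bipartiteAbove]
      _ = ∑ v, #(M.bipartiteBelow (fun S v => v ∈ S ∧ G.IsMixedIn S v) v) :=
          sum_card_bipartiteAbove_eq_sum_card_bipartiteBelow _
      _ ≤ ∑ v, G.degree v * Gᶜ.degree v := by
          refine sum_le_sum fun v _ => le_trans (card_le_card ?_) (G.card_filter_isMixedIn_le v)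
          exact filter_subset_filter _ (filter_subset _ _)
  rw [card_powersetCard, card_univ] at hP
  omega

theorem four_mul_degree_mul_degree_compl_le (G : SimpleGraph V) (v : V) :
    4 * (G.degree v * Gᶜ.degree v) ≤ (Fintype.card V - 1) ^ 2 := by
  have hsum : G.degree v + Gᶜ.degree v = Fintype.card V - 1 := by
    have := G.degree_lt_card_verts v
    rw [degree_compl]; omega
  rw [← hsum, ← mul_assoc]
  exact four_mul_le_sq_add _ _

theorem choose_three_le_four_mul_card_cliqueFinset_add_choose_two (G : SimpleGraph V) :
    (Fintype.card V).choose 3 ≤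
      4 * (#(G.cliqueFinset 3) + #(Gᶜ.cliqueFinset 3)) + (Fintype.card V).choose 2 := by
  have hdeg : 4 * ∑ v, G.degree v * Gᶜ.degree v ≤ Fintype.card V * (Fintype.card V - 1) ^ 2 := by
    rw [mul_sum]
    calc ∑ v, 4 * (G.degree v * Gᶜ.degree v) ≤ ∑ _v : V, (Fintype.card V - 1) ^ 2 :=
          sum_le_sum fun v _ => G.four_mul_degree_mul_degree_compl_le v
      _ = Fintype.card V * (Fintype.card V - 1) ^ 2 := by rw [sum_const, card_univ, smul_eq_mul]
  have hcount := G.two_mul_choose_three_le_add_sum_degree_mul_degree_compl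
  have hchoose := Nat.six_mul_choose_three_add_two_mul_choose_two (Fintype.card V)
  omega

end SimpleGraph

theorem stmt_5_general (ε : ℝ) (hε : 0 < ε) :
    ∃ n₀ : ℕ, ∀ n : ℕ, n₀ < n → ∀ (V : Type) [Fintype V], Fintype.card V = n →
      ∀ G H : SimpleGraph V, (∀ u v : V, u ≠ v → (G.Adj u v ↔ ¬ H.Adj u v)) →
        (1 / 4 - ε) * (n.choose 3 : ℝ) ≤
          ((G.cliqueFinset 3).card : ℝ) + ((H.cliqueFinset 3).card : ℝ) := by
  refine ⟨⌈3 / (4 * ε)⌉₊ + 2, fun n hn V _ hV G H hGH => ?_⟩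
  have hgoodman : n.choose 3 ≤ 4 * (#(G.cliqueFinset 3) + #(H.cliqueFinset 3)) + n.choose 2 := by
    obtain rfl := SimpleGraph.eq_compl_of_adj_iff_not_adj hGH
    subst hV
    -- `convert` reconciles the decidability instance of `Gᶜ.Adj` with the classical one of `H.Adj`
    convert G.choose_three_le_four_mul_card_cliqueFinset_add_choose_two using 6
  have hchoose : (n.choose 3 : ℝ) * 3 = n.choose 2 * ((n : ℝ) - 2) := by
    have h := congrArg (Nat.cast (R := ℝ)) (Nat.choose_succ_right_eq n 2)
    push_cast [Nat.cast_sub (by omega : 2 ≤ n)] at h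
    exact h
  have hn : 3 ≤ 4 * ε * ((n : ℝ) - 2) := by
    have hceil : ((⌈3 / (4 * ε)⌉₊ + 2 : ℕ) : ℝ) < n := by exact_mod_cast hn
    push_cast at hceil
    have h : 3 / (4 * ε) ≤ (n : ℝ) - 2 := by linarith [Nat.le_ceil (3 / (4 * ε))]
    rw [div_le_iff₀ (by positivity)] at h
    linarith
  have hchoose_two : (n.choose 2 : ℝ) ≤ 4 * ε * n.choose 3 := by
    nlinarith [(n.choose 2).cast_nonneg (α := ℝ)]
  have hgoodmanR : (n.choose 3 : ℝ) ≤
      4 * (((G.cliqueFinset 3).card : ℝ) + (H.cliqueFinset 3).card) + n.choose 2 := by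
    exact_mod_cast hgoodman
  linear_combination (hgoodmanR + hchoose_two) / 4

/-- Approximate Goodman's theorem: for every `0 < ε < 1/100` there exists `n₀` such that
for all `n > n₀`, in every 2-colouring `E(K_n) = E(G) ⊔ E(H)` we have
`T(G) + T(H) ≥ (1/4 - ε)·C(n,3)`. -/
theorem stmt_5 (ε : ℝ) (hε : 0 < ε) (hε' : ε < 1 / 100) :
    ∃ n₀ : ℕ, ∀ n : ℕ, n₀ < n → ∀ (V : Type) [Fintype V], Fintype.card V = n →
      ∀ G H : SimpleGraph V, (∀ u v : V, u ≠ v → (G.Adj u v ↔ ¬ H.Adj u v)) →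
        (1 / 4 - ε) * (n.choose 3 : ℝ) ≤
          ((G.cliqueFinset 3).card : ℝ) + ((H.cliqueFinset 3).card : ℝ) :=
  stmt_5_general ε hε
end

section
/- For every ε with 0 < ε < 1/100 there exists n₀ such that for all n > n₀: in every 2-coloring E(K_n) = E(G) ⊔ E(H) there is a color class, say G, satisfying both T(G) ≥ (1/6 - ε)·Σ_u C(d_G(u),2) and Σ_u C(d_G(u),2) ≥ n³/10⁶. -/
/-!
Write `S(G) = Σ_u C(d_G(u), 2)` for the number of cherries of `G` and `Q = Σ_u d_G(u) d_H(u)`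
for the number of bichromatic cherries of the colouring. Counting ordered triples by the colours
of their three pairs gives `2 S(G) = 6 T(G) + W(G)`, where `W(G)` counts ordered `G`-cherries
with base in `H`, and `Q = W(G) + W(H)`; hence Goodman's identity
`2 (S(G) + S(H)) = 6 (T(G) + T(H)) + Q`. Together with `2 (S(G) + S(H) + Q) = n(n-1)(n-2)` and
`4Q ≤ n(n-1)²` this shows that the triangle excesses `T - (1/6 - ε) S` of the two colours have a
nonnegative sum once `ε n` is large, so some colour satisfies the triangle bound. If only `G`
does, the deficit of `H` forces `S(H) ≤ n · 2e(G)`, so `G` has `Ω(n²)` edges, and Cauchy–Schwarz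
gives `S(G) = Ω(n³)`. If both do, the colour with more cherries has `S ≥ n(n-1)(n-3)/8`.
-/

open scoped Classical

open Finset

namespace SimpleGraph

variable {V : Type*} [Fintype V]

noncomputable def wedgeFinset (A B C : SimpleGraph V) : Finset (V × V × V) :=
  {p | A.Adj p.1 p.2.1 ∧ B.Adj p.1 p.2.2 ∧ C.Adj p.2.1 p.2.2}

noncomputable def cherryCount (A : SimpleGraph V) : ℕ := ∑ u, (A.degree u).choose 2

section Wedges

variable (A B C : SimpleGraph V)

lemma mem_wedgeFinset {p : V × V × V} :
    p ∈ A.wedgeFinset B C ↔ A.Adj p.1 p.2.1 ∧ B.Adj p.1 p.2.2 ∧ C.Adj p.2.1 p.2.2 := by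
  simp [wedgeFinset]

lemma card_wedgeFinset_swap_legs : #(A.wedgeFinset B C) = #(B.wedgeFinset A C) :=
  card_equiv ((Equiv.refl V).prodCongr (Equiv.prodComm V V)) fun p => by
    simp [mem_wedgeFinset, C.adj_comm p.2.2]; tauto

lemma card_wedgeFinset_swap_leg_base : #(A.wedgeFinset B C) = #(A.wedgeFinset C B) :=
  card_nbij' (fun p => (p.2.1, p.1, p.2.2)) (fun p => (p.2.1, p.1, p.2.2))
    (fun p hp => by simp_all [mem_wedgeFinset, A.adj_comm p.1])
    (fun p hp => by simp_all [mem_wedgeFinset, A.adj_comm p.1]) (fun _ _ => rfl) (fun _ _ => rfl)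

lemma card_wedgeFinset_sup {C₁ C₂ : SimpleGraph V} (h : Disjoint C₁ C₂) :
    #(A.wedgeFinset B (C₁ ⊔ C₂)) = #(A.wedgeFinset B C₁) + #(A.wedgeFinset B C₂) := by
  rw [← card_union_of_disjoint]
  · congr 1; ext p; simp only [mem_wedgeFinset, sup_adj, mem_union]; tauto
  · refine Finset.disjoint_left.2 fun p hp₁ hp₂ => ?_
    rw [mem_wedgeFinset] at hp₁ hp₂
    exact h.le_bot ⟨hp₁.2.2, hp₂.2.2⟩

lemma card_wedgeFinset_eq_sum : #(A.wedgeFinset B C) =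
    ∑ u, #((A.neighborFinset u ×ˢ B.neighborFinset u).filter fun q => C.Adj q.1 q.2) := by
  rw [wedgeFinset, card_filter, Fintype.sum_prod_type]
  refine sum_congr rfl fun u _ => ?_
  rw [← card_filter]
  congr 1
  ext q
  simp [and_assoc]

lemma card_wedgeFinset_le : #(A.wedgeFinset B C) ≤ Fintype.card V * ∑ u, C.degree u := by
  have hpairs : #({q : V × V | C.Adj q.1 q.2} : Finset _) = ∑ u, C.degree u := by
    rw [card_filter, Fintype.sum_prod_type]
    refine sum_congr rfl fun u _ => ?_
    rw [← card_filter, ← card_neighborFinset_eq_degree, neighborFinset_eq_filter]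
  calc #(A.wedgeFinset B C)
      ≤ ∑ _u : V, #({q : V × V | C.Adj q.1 q.2} : Finset _) := by
        rw [card_wedgeFinset_eq_sum]
        exact sum_le_sum fun u _ => card_le_card fun q hq => by simp_all
    _ = Fintype.card V * ∑ u, C.degree u := by rw [sum_const, card_univ, smul_eq_mul, hpairs]

lemma card_wedgeFinset_self : #(A.wedgeFinset A A) = 6 * #(A.cliqueFinset 3) := by
  have hmaps : ∀ p ∈ A.wedgeFinset A A, ({p.1, p.2.1, p.2.2} : Finset V) ∈ A.cliqueFinset 3 :=
    fun p hp => mem_cliqueFinset_iff.2 (is3Clique_triple_iff.2 ((mem_wedgeFinset ..).1 hp))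
  rw [card_eq_sum_card_fiberwise hmaps, mul_comm, ← smul_eq_mul, ← sum_const]
  refine sum_congr rfl fun t ht => ?_
  obtain ⟨x, y, z, hxy, hxz, hyz, rfl⟩ := is3Clique_iff.1 (mem_cliqueFinset_iff.1 ht)
  have hfiber : {p ∈ A.wedgeFinset A A | ({p.1, p.2.1, p.2.2} : Finset V) = {x, y, z}} =
      {(x, y, z), (x, z, y), (y, x, z), (y, z, x), (z, x, y), (z, y, x)} := by
    ext ⟨a, b, c⟩
    simp only [mem_filter, mem_wedgeFinset, mem_insert, mem_singleton, Prod.mk.injEq]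
    constructor
    · rintro ⟨⟨hab, hac, hbc⟩, h⟩
      have ha : a ∈ ({x, y, z} : Finset V) := h ▸ by simp
      have hb : b ∈ ({x, y, z} : Finset V) := h ▸ by simp
      have hc : c ∈ ({x, y, z} : Finset V) := h ▸ by simp
      simp only [mem_insert, mem_singleton] at ha hb hc
      have := hab.ne; have := hac.ne; have := hbc.ne
      grind
    · rintro (h | h | h | h | h | h) <;> obtain ⟨rfl, rfl, rfl⟩ := h <;>
        refine ⟨by simp [hxy, hxz, hyz, hxy.symm, hxz.symm, hyz.symm], ?_⟩ <;>
        ext <;> simp <;> tauto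
  rw [hfiber]
  simp [hxy.ne, hxz.ne, hyz.ne, hxy.ne.symm, hxz.ne.symm, hyz.ne.symm]

lemma card_wedgeFinset_self_top : #(A.wedgeFinset A ⊤) = 2 * A.cherryCount := by
  rw [card_wedgeFinset_eq_sum, cherryCount, mul_sum]
  refine sum_congr rfl fun u _ => ?_
  trans #(A.neighborFinset u).offDiag
  · congr 1; ext q; simp [and_assoc]
  rw [offDiag_card, card_neighborFinset_eq_degree, ← Nat.mul_sub_one, Nat.choose_two_right,
    Nat.mul_div_cancel' (Nat.even_mul_pred_self _).two_dvd]

lemma sq_sum_degree_le :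
    (∑ u, (A.degree u : ℝ)) ^ 2 ≤ Fintype.card V * (2 * A.cherryCount + ∑ u, (A.degree u : ℝ)) := by
  have hsq : ∑ u, (A.degree u : ℝ) ^ 2 = 2 * A.cherryCount + ∑ u, (A.degree u : ℝ) := by
    simp only [cherryCount, Nat.cast_sum, Nat.cast_choose_two, mul_sum, ← sum_add_distrib]
    exact sum_congr rfl fun u _ => by ring
  simpa [hsq] using sq_sum_le_card_mul_sum_sq (s := univ) (f := fun u => (A.degree u : ℝ))

end Wedges

section Complementary

variable {G H : SimpleGraph V} (h : IsCompl G H)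
include h

lemma card_wedgeFinset_top_of_isCompl : #(G.wedgeFinset H ⊤) = ∑ u, G.degree u * H.degree u := by
  rw [card_wedgeFinset_eq_sum]
  refine sum_congr rfl fun u _ => ?_
  trans #(G.neighborFinset u ×ˢ H.neighborFinset u)
  · congr 1
    ext ⟨b, c⟩
    simp only [mem_filter, mem_product, mem_neighborFinset, top_adj, and_iff_left_iff_imp]
    rintro ⟨hG, hH⟩ rfl
    exact h.disjoint.le_bot ⟨hG, hH⟩
  rw [card_product, card_neighborFinset_eq_degree, card_neighborFinset_eq_degree]

lemma two_mul_cherryCount_of_isCompl :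
    2 * G.cherryCount = 6 * #(G.cliqueFinset 3) + #(G.wedgeFinset G H) := by
  rw [← card_wedgeFinset_self_top, ← h.sup_eq_top, card_wedgeFinset_sup _ _ h.disjoint,
    card_wedgeFinset_self]

lemma sum_degree_mul_degree_of_isCompl :
    ∑ u, G.degree u * H.degree u = #(G.wedgeFinset G H) + #(H.wedgeFinset H G) := by
  rw [← card_wedgeFinset_top_of_isCompl h, ← h.sup_eq_top, card_wedgeFinset_sup _ _ h.disjoint,
    card_wedgeFinset_swap_leg_base G H G, card_wedgeFinset_swap_legs G H H,
    card_wedgeFinset_swap_leg_base H G H]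

/-- Goodman's identity. -/
lemma two_mul_cherryCount_add_cherryCount : 2 * (G.cherryCount + H.cherryCount) =
    6 * (#(G.cliqueFinset 3) + #(H.cliqueFinset 3)) + ∑ u, G.degree u * H.degree u := by
  rw [sum_degree_mul_degree_of_isCompl h]
  linarith [two_mul_cherryCount_of_isCompl h, two_mul_cherryCount_of_isCompl h.symm]

lemma degree_add_degree_of_isCompl (u : V) :
    (G.degree u : ℝ) + H.degree u = Fintype.card V - 1 := by
  have hlt := G.degree_lt_card_verts u
  have : G.degree u + H.degree u + 1 = Fintype.card V := by
    rw [← h.compl_eq, degree_compl]; omega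
  rw [← this]; push_cast; ring

lemma two_mul_cherryCount_add_cherryCount_add_sum :
    2 * ((G.cherryCount : ℝ) + H.cherryCount + ∑ u, (G.degree u : ℝ) * H.degree u) =
      Fintype.card V * (Fintype.card V - 1) * (Fintype.card V - 2) := by
  simp only [cherryCount, Nat.cast_sum, Nat.cast_choose_two, ← sum_add_distrib, mul_sum]
  calc _ = ∑ _u : V, ((Fintype.card V : ℝ) - 1) * (Fintype.card V - 2) := by
        refine sum_congr rfl fun u _ => ?_
        linear_combination ((G.degree u : ℝ) + H.degree u + Fintype.card V - 2) *
          degree_add_degree_of_isCompl h u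
    _ = _ := by rw [sum_const, card_univ, nsmul_eq_mul]; ring

lemma four_mul_sum_degree_mul_le :
    4 * ∑ u, (G.degree u : ℝ) * H.degree u ≤ Fintype.card V * (Fintype.card V - 1) ^ 2 := by
  calc _ ≤ ∑ _u : V, ((Fintype.card V : ℝ) - 1) ^ 2 := by
        rw [mul_sum]
        refine sum_le_sum fun u _ => ?_
        rw [← degree_add_degree_of_isCompl h u]
        nlinarith [sq_nonneg ((G.degree u : ℝ) - H.degree u)]
    _ = _ := by rw [sum_const, card_univ, nsmul_eq_mul]

lemma le_four_mul_cherryCount_add :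
    Fintype.card V * (Fintype.card V - 1) * (Fintype.card V - 3) ≤
      4 * ((G.cherryCount : ℝ) + H.cherryCount) := by
  linarith [two_mul_cherryCount_add_cherryCount_add_sum h, four_mul_sum_degree_mul_le h]

variable {ε : ℝ}

lemma triangle_excess_add_nonneg (hε : 0 ≤ ε) (hεn : 1 ≤ 3 * ε * (Fintype.card V - 3)) :
    0 ≤ (#(G.cliqueFinset 3) - (1 / 6 - ε) * G.cherryCount) +
      (#(H.cliqueFinset 3) - (1 / 6 - ε) * H.cherryCount : ℝ) := by
  have hgoodman : 2 * ((G.cherryCount : ℝ) + H.cherryCount) =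
      6 * (#(G.cliqueFinset 3) + #(H.cliqueFinset 3)) + ∑ u, (G.degree u : ℝ) * H.degree u := by
    exact_mod_cast two_mul_cherryCount_add_cherryCount h
  have hS := le_four_mul_cherryCount_add h
  have hQ := four_mul_sum_degree_mul_le h
  have hid := two_mul_cherryCount_add_cherryCount_add_sum h
  set n : ℝ := (Fintype.card V : ℝ)
  have hn : 3 < n := by nlinarith
  -- the excess is `(S - Q)/6 + ε S` with `S - Q ≥ -n(n-1)/2` and `S ≥ n(n-1)(n-3)/4`
  nlinarith [mul_le_mul_of_nonneg_left hS hε, mul_nonneg (by nlinarith : 0 ≤ n * (n - 1))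
    (sub_nonneg.2 hεn)]

lemma cube_div_le_cherryCount_of_triangle_deficit (hε : 0 ≤ ε)
    (hn : 100 ≤ (Fintype.card V : ℝ))
    (hH : (#(H.cliqueFinset 3) : ℝ) < (1 / 6 - ε) * H.cherryCount) :
    (Fintype.card V : ℝ) ^ 3 / 10 ^ 6 ≤ G.cherryCount := by
  have hcherry : 2 * (H.cherryCount : ℝ) = 6 * #(H.cliqueFinset 3) + #(H.wedgeFinset H G) := by
    exact_mod_cast two_mul_cherryCount_of_isCompl h.symm
  have hwedges : (#(H.wedgeFinset H G) : ℝ) ≤ Fintype.card V * ∑ u, (G.degree u : ℝ) := by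
    exact_mod_cast card_wedgeFinset_le H H G
  have hS := le_four_mul_cherryCount_add h
  have hCS := sq_sum_degree_le G
  set n : ℝ := (Fintype.card V : ℝ)
  set P : ℝ := ∑ u, (G.degree u : ℝ)
  have hHP : (H.cherryCount : ℝ) ≤ n * P := by
    nlinarith [mul_nonneg hε (Nat.cast_nonneg (α := ℝ) H.cherryCount)]
  by_contra! hG
  have hP : n ^ 2 / 5 ≤ P := by nlinarith
  nlinarith

lemma cherry_triangle_bounds_or_of_isCompl (hε : 0 ≤ ε) (hn : 100 ≤ (Fintype.card V : ℝ))
    (hεn : 1 ≤ 3 * ε * (Fintype.card V - 3)) :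
    ((1 / 6 - ε) * G.cherryCount ≤ (#(G.cliqueFinset 3) : ℝ) ∧
        (Fintype.card V : ℝ) ^ 3 / 10 ^ 6 ≤ G.cherryCount) ∨
      ((1 / 6 - ε) * H.cherryCount ≤ (#(H.cliqueFinset 3) : ℝ) ∧
        (Fintype.card V : ℝ) ^ 3 / 10 ^ 6 ≤ H.cherryCount) := by
  have hsum := triangle_excess_add_nonneg h hε hεn
  rcases lt_or_ge (#(H.cliqueFinset 3) : ℝ) ((1 / 6 - ε) * H.cherryCount) with hH | hH
  · exact .inl ⟨by linarith, cube_div_le_cherryCount_of_triangle_deficit h hε hn hH⟩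
  rcases lt_or_ge (#(G.cliqueFinset 3) : ℝ) ((1 / 6 - ε) * G.cherryCount) with hG | hG
  · exact .inr ⟨hH, cube_div_le_cherryCount_of_triangle_deficit h.symm hε hn hG⟩
  have hS := le_four_mul_cherryCount_add h
  have hcube : 2 * ((Fintype.card V : ℝ) ^ 3 / 10 ^ 6) ≤ G.cherryCount + H.cherryCount := by
    nlinarith
  rcases le_total (G.cherryCount : ℝ) H.cherryCount with hle | hle
  · exact .inr ⟨hH, by linarith⟩
  · exact .inl ⟨hG, by linarith⟩

end Complementary

end SimpleGraph

open SimpleGraph in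
theorem stmt_6_general (ε : ℝ) (hε : 0 < ε) :
    ∃ n₀ : ℕ, ∀ n : ℕ, n₀ < n → ∀ (V : Type) [Fintype V], Fintype.card V = n →
      ∀ G H : SimpleGraph V, (∀ u v : V, u ≠ v → (G.Adj u v ↔ ¬ H.Adj u v)) →
        ((1 / 6 - ε) * ∑ u : V, ((G.degree u).choose 2 : ℝ) ≤ ((G.cliqueFinset 3).card : ℝ) ∧
            (n : ℝ) ^ 3 / 10 ^ 6 ≤ ∑ u : V, ((G.degree u).choose 2 : ℝ)) ∨
          ((1 / 6 - ε) * ∑ u : V, ((H.degree u).choose 2 : ℝ) ≤ ((H.cliqueFinset 3).card : ℝ) ∧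
            (n : ℝ) ^ 3 / 10 ^ 6 ≤ ∑ u : V, ((H.degree u).choose 2 : ℝ)) := by
  refine ⟨⌈1 / ε⌉₊ + 100, fun n hn V _ hcard G H hGH => ?_⟩
  have hcompl : IsCompl G H := by
    refine (eq_compl_iff_isCompl.1 ?_).symm
    ext u v
    rw [compl_adj]
    by_cases huv : u = v
    · simp [huv]
    · simp [huv, hGH u v huv]
  have hn : (⌈1 / ε⌉₊ : ℝ) + 100 < n := by exact_mod_cast hn
  have hεn : 1 ≤ 3 * ε * (n - 3) := by
    have := Nat.le_ceil (1 / ε)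
    have : 1 ≤ ε * (n - 3) := by rw [← div_le_iff₀' hε]; linarith
    linarith
  have := cherry_triangle_bounds_or_of_isCompl hcompl hε.le (by rw [hcard]; linarith)
    (by rwa [hcard])
  simpa [cherryCount, hcard] using this

/-- For every `0 < ε < 1/100` there exists `n₀` such that for all `n > n₀`, in every
2-colouring `E(K_n) = E(G) ⊔ E(H)` there is a colour class, say `G`, with
`T(G) ≥ (1/6 - ε)·Σ_u C(d_G(u),2)` and `Σ_u C(d_G(u),2) ≥ n³/10⁶`. -/
theorem stmt_6 (ε : ℝ) (hε : 0 < ε) (hε' : ε < 1 / 100) :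
    ∃ n₀ : ℕ, ∀ n : ℕ, n₀ < n → ∀ (V : Type) [Fintype V], Fintype.card V = n →
      ∀ G H : SimpleGraph V, (∀ u v : V, u ≠ v → (G.Adj u v ↔ ¬ H.Adj u v)) →
        ((1 / 6 - ε) * ∑ u : V, ((G.degree u).choose 2 : ℝ) ≤ ((G.cliqueFinset 3).card : ℝ) ∧
            (n : ℝ) ^ 3 / 10 ^ 6 ≤ ∑ u : V, ((G.degree u).choose 2 : ℝ)) ∨
          ((1 / 6 - ε) * ∑ u : V, ((H.degree u).choose 2 : ℝ) ≤ ((H.cliqueFinset 3).card : ℝ) ∧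
            (n : ℝ) ^ 3 / 10 ^ 6 ≤ ∑ u : V, ((H.degree u).choose 2 : ℝ)) :=
  stmt_6_general ε hε
end

section
/- For every integer c ≥ 3 there exist n₀ and α_c > 0 such that for all n > n₀, in every c-coloring E(K_n) = G₁ ⊔ ... ⊔ G_c there is a color class G_i with T(G_i) ≥ α_c·Σ_u C(d_{G_i}(u),2) and Σ_u C(d_{G_i}(u),2) ≥ α_c·n³. -/
/-!
By the multicolour Ramsey theorem for triangles, every `N = triangleRamseyBound c` vertices span
a monochromatic triangle. Each triangle lies in only `C(n-3, N-3)` of the `N`-subsets, so there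
are at least `C(n,3) / C(N,3)` monochromatic triangles, and the colour class `G_i` with the most
of them has `T(G_i) ≥ n³ / K` for a constant `K`. Every triangle yields three cherries, so
`Σ_u C(d(u),2) ≥ 3 T(G_i) ≥ n³ / K`, while trivially `Σ_u C(d(u),2) ≤ n³ ≤ K T(G_i)`.
-/

open Finset

theorem Finset.choose_le_card_mul_choose_of_forall_exists_subset {α : Type*} [Fintype α]
    {S : Finset (Finset α)} {k N : ℕ} (hS : ∀ s ∈ S, #s = k) (hkN : k ≤ N)
    (hN : N ≤ Fintype.card α) (hhit : ∀ A : Finset α, #A = N → ∃ s ∈ S, s ⊆ A) :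
    (Fintype.card α).choose k ≤ #S * N.choose k := by
  classical
  set n := Fintype.card α
  have hcount : n.choose N * 1 ≤ #S * (n - k).choose (N - k) := by
    have := card_mul_le_card_mul (fun A s => s ⊆ A) (s := univ.powersetCard N) (t := S)
      (fun A hA => card_pos.2 <| by
        obtain ⟨s, hs, hsA⟩ := hhit A (mem_powersetCard.1 hA).2
        exact ⟨s, (mem_bipartiteAbove _).2 ⟨hs, hsA⟩⟩)
      (n := (n - k).choose (N - k)) (fun s hs => by
        rw [bipartiteBelow, card_filter_powersetCard_subset s univ N (subset_univ s)
          ((hS s hs).trans_le hkN), hS s hs, card_univ])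
    simpa [card_powersetCard] using this
  have hpos : 0 < (n - k).choose (N - k) := Nat.choose_pos (by omega)
  refine Nat.le_of_mul_le_mul_right ?_ hpos
  calc n.choose k * (n - k).choose (N - k) = n.choose N * N.choose k := (Nat.choose_mul hkN).symm
    _ ≤ #S * (n - k).choose (N - k) * N.choose k := by simpa using Nat.mul_le_mul_right _ hcount
    _ = #S * N.choose k * (n - k).choose (N - k) := by ring

theorem Nat.pow_three_le_mul_choose_three {n : ℕ} (hn : 4 ≤ n) : n ^ 3 ≤ 24 * n.choose 3 := by
  obtain ⟨m, rfl⟩ := Nat.exists_eq_add_of_le' hn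
  have h := Nat.descFactorial_eq_factorial_mul_choose (m + 4) 3
  norm_num [Nat.descFactorial, Nat.factorial] at h
  rw [show m + 4 - 2 = m + 2 by omega] at h
  nlinarith

namespace SimpleGraph

variable {V : Type*} [Fintype V] (G : SimpleGraph V) [DecidableRel G.Adj]

theorem sum_degree_choose_two_le : ∑ u, (G.degree u).choose 2 ≤ Fintype.card V ^ 3 :=
  calc ∑ u, (G.degree u).choose 2 ≤ ∑ _u : V, Fintype.card V ^ 2 :=
        sum_le_sum fun u _ => (Nat.choose_le_pow _ _).trans <|
          Nat.pow_le_pow_left (G.degree_lt_card_verts u).le 2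
    _ = Fintype.card V ^ 3 := by rw [sum_const, card_univ, smul_eq_mul]; ring

variable [DecidableEq V]

theorem card_filter_mem_cliqueFinset_three_le (u : V) :
    #{t ∈ G.cliqueFinset 3 | u ∈ t} ≤ (G.degree u).choose 2 := by
  rw [← card_neighborFinset_eq_degree, ← card_powersetCard]
  refine card_le_card_of_injOn (·.erase u) (fun t ht => ?_) (fun a ha b hb hab => ?_)
  · obtain ⟨htG, hut⟩ := mem_filter.1 ht
    have hclique := mem_cliqueFinset_iff.1 htG
    refine mem_powersetCard.2 ⟨fun x hx => ?_, by rw [card_erase_of_mem hut, hclique.2]⟩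
    exact (mem_neighborFinset _ _ _).2 <|
      hclique.1 hut (mem_of_mem_erase hx) (ne_of_mem_erase hx).symm
  · rw [← insert_erase (mem_filter.1 ha).2, ← insert_erase (mem_filter.1 hb).2]
    exact congrArg (insert u) hab

theorem three_mul_card_cliqueFinset_three_le :
    3 * #(G.cliqueFinset 3) ≤ ∑ u, (G.degree u).choose 2 :=
  calc 3 * #(G.cliqueFinset 3) = ∑ t ∈ G.cliqueFinset 3, #t := by
        rw [sum_congr rfl fun t ht => (mem_cliqueFinset_iff.1 ht).2, sum_const, smul_eq_mul,
          mul_comm]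
    _ = ∑ u, #{t ∈ G.cliqueFinset 3 | u ∈ t} := by
        simpa [bipartiteAbove, bipartiteBelow] using
          (sum_card_bipartiteAbove_eq_sum_card_bipartiteBelow (fun u t => u ∈ t)
            (s := univ) (t := G.cliqueFinset 3)).symm
    _ ≤ ∑ u, (G.degree u).choose 2 :=
        sum_le_sum fun u _ => G.card_filter_mem_cliqueFinset_three_le u

def triangleRamseyBound : ℕ → ℕ
  | 0 => 3
  | k + 1 => (k + 1) * triangleRamseyBound k + 2

lemma three_le_triangleRamseyBound : ∀ k, 3 ≤ triangleRamseyBound k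
  | 0 => le_rfl
  | k + 1 => by
    have := three_le_triangleRamseyBound k
    simp only [triangleRamseyBound]
    nlinarith

/-- Some colour class contains more than `triangleRamseyBound k` neighbours of a vertex `v`:
either they span an edge of that colour, which closes a triangle with `v`, or they are coloured
by the remaining `k` colours. -/
theorem exists_isNClique_three_subset_of_triangleRamseyBound_le {V ι : Type*}
    (G : ι → SimpleGraph V) (k : ℕ) :
    ∀ (C : Finset ι) (s : Finset V), #C = k → triangleRamseyBound k ≤ #s →
      (∀ u ∈ s, ∀ v ∈ s, u ≠ v → ∃ i ∈ C, (G i).Adj u v) →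
        ∃ i ∈ C, ∃ t ⊆ s, (G i).IsNClique 3 t := by
  classical
  induction k with
  | zero =>
    intro C s hC hs hcol
    obtain ⟨u, hu, v, hv, huv⟩ := one_lt_card.1 (lt_of_lt_of_le (by decide) hs)
    obtain ⟨i, hi, -⟩ := hcol u hu v hv huv
    simp [card_eq_zero.1 hC] at hi
  | succ k ih =>
    intro C s hC hs hcol
    obtain ⟨v, hv⟩ : s.Nonempty := card_pos.1 <|
      lt_of_lt_of_le (by have := three_le_triangleRamseyBound (k + 1); omega) hs
    set W : ι → Finset V := fun i => {u ∈ s.erase v | (G i).Adj v u}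
    have hcover : #(s.erase v) ≤ ∑ i ∈ C, #(W i) := by
      refine (card_le_card fun u hu => ?_).trans card_biUnion_le
      obtain ⟨i, hi, hvu⟩ := hcol v hv u (mem_of_mem_erase hu) (ne_of_mem_erase hu).symm
      exact mem_biUnion.2 ⟨i, hi, mem_filter.2 ⟨hu, hvu⟩⟩
    obtain ⟨i, hiC, hi⟩ : ∃ i ∈ C, triangleRamseyBound k < #(W i) := by
      refine exists_lt_of_sum_lt (lt_of_lt_of_le ?_ hcover)
      rw [sum_const, smul_eq_mul, hC, card_erase_of_mem hv]
      simp only [triangleRamseyBound] at hs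
      omega
    by_cases hedge : ∃ a ∈ W i, ∃ b ∈ W i, (G i).Adj a b
    · obtain ⟨a, ha, b, hb, hab⟩ := hedge
      have hW : W i ⊆ s := filter_subset _ _ |>.trans (erase_subset _ _)
      refine ⟨i, hiC, {v, a, b}, ?_, is3Clique_triple_iff.2
        ⟨(mem_filter.1 ha).2, (mem_filter.1 hb).2, hab⟩⟩
      simp only [insert_subset_iff, singleton_subset_iff]
      exact ⟨hv, hW ha, hW hb⟩
    · push Not at hedge
      obtain ⟨j, hj, t, hts, ht⟩ := ih (C.erase i) (W i)
        (by rw [card_erase_of_mem hiC, hC, Nat.add_sub_cancel]) hi.le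
        (fun a ha b hb hab => by
          obtain ⟨j, hj, hjab⟩ := hcol a (mem_of_mem_erase (mem_filter.1 ha).1)
            b (mem_of_mem_erase (mem_filter.1 hb).1) hab
          refine ⟨j, mem_erase.2 ⟨?_, hj⟩, hjab⟩
          rintro rfl
          exact hedge a ha b hb hjab)
      exact ⟨j, mem_of_mem_erase hj, t, hts.trans ((filter_subset _ _).trans (erase_subset _ _)),
        ht⟩

variable {V ι : Type*} [Fintype V] [Fintype ι] [DecidableEq V] (G : ι → SimpleGraph V)
  [∀ i, DecidableRel (G i).Adj]

theorem choose_three_le_card_biUnion_cliqueFinset_mul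
    (hV : triangleRamseyBound (Fintype.card ι) ≤ Fintype.card V)
    (hcol : ∀ u v : V, u ≠ v → ∃ i, (G i).Adj u v) :
    (Fintype.card V).choose 3 ≤ #(univ.biUnion fun i => (G i).cliqueFinset 3) *
      (triangleRamseyBound (Fintype.card ι)).choose 3 := by
  refine choose_le_card_mul_choose_of_forall_exists_subset (fun s hs => ?_)
    (three_le_triangleRamseyBound _) hV fun A hA => ?_
  · obtain ⟨i, -, hi⟩ := mem_biUnion.1 hs
    exact (mem_cliqueFinset_iff.1 hi).2
  · obtain ⟨i, -, t, htA, ht⟩ := exists_isNClique_three_subset_of_triangleRamseyBound_le G _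
      univ A card_univ hA.ge fun u _ v _ huv =>
        (hcol u v huv).imp fun i hi => ⟨mem_univ i, hi⟩
    exact ⟨t, mem_biUnion.2 ⟨i, mem_univ i, mem_cliqueFinset_iff.2 ht⟩, htA⟩

theorem exists_pow_three_le_mul_card_cliqueFinset_three [Nonempty ι]
    (hV : triangleRamseyBound (Fintype.card ι) < Fintype.card V)
    (hcol : ∀ u v : V, u ≠ v → ∃ i, (G i).Adj u v) :
    ∃ i, Fintype.card V ^ 3 ≤ 24 * Fintype.card ι *
      (triangleRamseyBound (Fintype.card ι)).choose 3 * #((G i).cliqueFinset 3) := by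
  obtain ⟨i, -, hmax⟩ := exists_max_image univ (fun i => #((G i).cliqueFinset 3)) univ_nonempty
  have hmono : #(univ.biUnion fun i => (G i).cliqueFinset 3) ≤
      Fintype.card ι * #((G i).cliqueFinset 3) :=
    card_biUnion_le.trans <| sum_le_card_nsmul _ _ _ fun j _ => hmax j (mem_univ j)
  refine ⟨i, ?_⟩
  calc Fintype.card V ^ 3 ≤ 24 * (Fintype.card V).choose 3 := Nat.pow_three_le_mul_choose_three
        (by have := three_le_triangleRamseyBound (Fintype.card ι); omega)
    _ ≤ 24 * (#(univ.biUnion fun i => (G i).cliqueFinset 3) *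
          (triangleRamseyBound (Fintype.card ι)).choose 3) :=
        Nat.mul_le_mul_left _ (choose_three_le_card_biUnion_cliqueFinset_mul G hV.le hcol)
    _ ≤ 24 * (Fintype.card ι * #((G i).cliqueFinset 3) *
          (triangleRamseyBound (Fintype.card ι)).choose 3) := by gcongr
    _ = _ := by ring

end SimpleGraph

open SimpleGraph

open scoped Classical in
/-- Ramsey multiplicity: for every `c ≥ 3` there exist `n₀` and `α_c > 0` such that for all
`n > n₀`, in every `c`-colouring `E(K_n) = G₁ ⊔ ... ⊔ G_c` there is a colour class `G_i` with
`T(G_i) ≥ α_c·Σ_u C(d_{G_i}(u),2)` and `Σ_u C(d_{G_i}(u),2) ≥ α_c·n³`. -/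
theorem stmt_7 (c : ℕ) (hc : 3 ≤ c) :
    ∃ (n₀ : ℕ) (α : ℝ), 0 < α ∧ ∀ n : ℕ, n₀ < n → ∀ (V : Type) [Fintype V],
      Fintype.card V = n → ∀ G : Fin c → SimpleGraph V,
        (∀ u v : V, u ≠ v → ∃! i : Fin c, (G i).Adj u v) →
          ∃ i : Fin c,
            α * ∑ u : V, (((G i).degree u).choose 2 : ℝ) ≤ (((G i).cliqueFinset 3).card : ℝ) ∧
            α * (n : ℝ) ^ 3 ≤ ∑ u : V, (((G i).degree u).choose 2 : ℝ) := by
  have : NeZero c := ⟨by omega⟩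
  set K := 24 * c * (triangleRamseyBound c).choose 3
  have hK : 0 < (K : ℝ) := by
    have := Nat.choose_pos (three_le_triangleRamseyBound c)
    positivity
  refine ⟨triangleRamseyBound c, 1 / K, by positivity, fun n hn V _ hV G hcol => ?_⟩
  obtain ⟨i, hi⟩ := exists_pow_three_le_mul_card_cliqueFinset_three G
    (by rwa [Fintype.card_fin, hV]) fun u v huv => (hcol u v huv).exists
  rw [Fintype.card_fin, hV] at hi
  have hcherries := (G i).three_mul_card_cliqueFinset_three_le
  have hcube := hV ▸ (G i).sum_degree_choose_two_le
  refine ⟨i, ?_, ?_⟩ <;> rw [one_div, inv_mul_le_iff₀ hK] <;> norm_cast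
  · exact hcube.trans hi
  · exact hi.trans (Nat.mul_le_mul_left _ (by omega))
end

section
/- Let 𝒢 be a linear r-graph and B = B(𝒢) its bowtie graph. Then every vertex of B has even degree, and the maximum degree of B is at most 2(r-1)². -/
open scoped Classical

/-- A hypergraph (finite set of hyperedges) is linear if any two distinct
hyperedges share at most one vertex. -/
def Linear {V : Type*} [DecidableEq V] (𝒢 : Finset (Finset V)) : Prop :=
  ∀ S ∈ 𝒢, ∀ T ∈ 𝒢, S ≠ T → (S ∩ T).card ≤ 1

/-- A hypergraph is `r`-uniform if every hyperedge has exactly `r` vertices. -/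
def Uniform {V : Type*} (r : ℕ) (𝒢 : Finset (Finset V)) : Prop :=
  ∀ S ∈ 𝒢, S.card = r

/-- A bowtie of `𝒢` is an unordered pair `{S, T}` of distinct hyperedges of `𝒢`
intersecting in exactly one vertex. -/
def IsBowtie {V : Type*} [DecidableEq V] (𝒢 : Finset (Finset V))
    (b : Finset (Finset V)) : Prop :=
  ∃ S T : Finset V, S ∈ 𝒢 ∧ T ∈ 𝒢 ∧ S ≠ T ∧ (S ∩ T).card = 1 ∧ b = {S, T}

/-- The bowtie graph `B(𝒢)`: vertices are the bowties of `𝒢`; bowties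
`b₁ = {S₁, T}` and `b₂ = {S₂, T}` are adjacent iff `|S₁ ∩ S₂| = 1` and
`S₁ ∩ S₂ ∩ T = ∅`. -/
def bowtieGraph {V : Type*} [DecidableEq V] (𝒢 : Finset (Finset V)) :
    SimpleGraph {b : Finset (Finset V) // IsBowtie 𝒢 b} where
  Adj b₁ b₂ := b₁ ≠ b₂ ∧ ∃ S₁ S₂ T : Finset V,
      (b₁ : Finset (Finset V)) = {S₁, T} ∧ (b₂ : Finset (Finset V)) = {S₂, T} ∧
      (S₁ ∩ S₂).card = 1 ∧ S₁ ∩ S₂ ∩ T = ∅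
  symm := by
    constructor
    rintro b₁ b₂ ⟨hne, S₁, S₂, T, h₁, h₂, hc, he⟩
    exact ⟨hne.symm, S₂, S₁, T, h₂, h₁, by rwa [Finset.inter_comm],
      by rwa [Finset.inter_comm S₂ S₁]⟩
  loopless := by constructor; rintro b ⟨hne, -⟩; exact hne rfl

/-!
If `S ∩ T = {u}`, the neighbours of the bowtie `{S, T}` are the bowties `{A, T}` and `{A, S}`,
where `A` runs over the edges meeting each of `S` and `T` in a single vertex other than `u`.
These two families are disjoint and in bijection, so the degree is even. Such an edge `A` is
determined by its two intersection points in `(S \ {u}) × (T \ {u})`, since two edges of a linear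
hypergraph sharing two vertices coincide; hence there are at most `(r - 1)²` of them.
-/

namespace Finset

theorem pair_eq_pair_iff {α : Type*} [DecidableEq α] {x y z w : α} :
    ({x, y} : Finset α) = {z, w} ↔ x = z ∧ y = w ∨ x = w ∧ y = z := by
  rw [← coe_inj, coe_pair, coe_pair, Set.pair_eq_pair_iff]

end Finset

section

open Finset

variable {V : Type*} [DecidableEq V] {𝒢 : Finset (Finset V)} {S T A : Finset V}

theorem Linear.eq_of_one_lt_card_inter {B : Finset V} (hlin : Linear 𝒢) (hA : A ∈ 𝒢)
    (hB : B ∈ 𝒢) (h : 1 < #(A ∩ B)) : A = B := by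
  by_contra hne
  exact (hlin A hA B hB hne).not_gt h

theorem isBowtie_pair_iff :
    IsBowtie 𝒢 {S, T} ↔ S ∈ 𝒢 ∧ T ∈ 𝒢 ∧ S ≠ T ∧ #(S ∩ T) = 1 := by
  constructor
  · rintro ⟨S', T', hS', hT', hne, hcard, h⟩
    rcases pair_eq_pair_iff.mp h with ⟨rfl, rfl⟩ | ⟨rfl, rfl⟩
    · exact ⟨hS', hT', hne, hcard⟩
    · exact ⟨hT', hS', hne.symm, by rwa [inter_comm]⟩
  · rintro ⟨hS, hT, hne, hcard⟩
    exact ⟨S, T, hS, hT, hne, hcard, rfl⟩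

def crossingEdges (𝒢 : Finset (Finset V)) (S T : Finset V) : Finset (Finset V) :=
  𝒢.filter fun A => #(A ∩ S) = 1 ∧ #(A ∩ T) = 1 ∧ A ∩ S ∩ T = ∅

theorem mem_crossingEdges :
    A ∈ crossingEdges 𝒢 S T ↔ A ∈ 𝒢 ∧ #(A ∩ S) = 1 ∧ #(A ∩ T) = 1 ∧ A ∩ S ∩ T = ∅ :=
  mem_filter

theorem crossingEdges_comm : crossingEdges 𝒢 S T = crossingEdges 𝒢 T S := by
  ext A
  simp only [mem_crossingEdges, inter_right_comm A S T]
  tauto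

theorem ne_of_mem_crossingEdges (hST : (S ∩ T).Nonempty) (hA : A ∈ crossingEdges 𝒢 S T) :
    A ≠ S ∧ A ≠ T := by
  obtain ⟨x, hx⟩ := hST
  have hxA := eq_empty_iff_forall_notMem.mp (mem_crossingEdges.mp hA).2.2.2 x
  rw [mem_inter] at hx
  constructor <;> rintro rfl <;> simp_all

theorem isBowtie_of_mem_crossingEdges (hT : T ∈ 𝒢) (hST : (S ∩ T).Nonempty)
    (hA : A ∈ crossingEdges 𝒢 S T) : IsBowtie 𝒢 {A, T} :=
  isBowtie_pair_iff.mpr ⟨(mem_crossingEdges.mp hA).1, hT, (ne_of_mem_crossingEdges hST hA).2,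
    (mem_crossingEdges.mp hA).2.2.1⟩

theorem bowtieGraph_adj_iff {b b' : {b // IsBowtie 𝒢 b}} (hb : b.1 = {S, T})
    (hST : (S ∩ T).Nonempty) :
    (bowtieGraph 𝒢).Adj b b' ↔
      ∃ A ∈ crossingEdges 𝒢 S T, b'.1 = {A, T} ∨ b'.1 = {A, S} := by
  constructor
  · rintro ⟨-, S₁, S₂, T', h₁, h₂, hcard, hempty⟩
    obtain ⟨hS₂, -, -, hS₂T'⟩ := isBowtie_pair_iff.mp (h₂ ▸ b'.2)
    have hS₂ : S₂ ∈ crossingEdges 𝒢 S₁ T' :=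
      mem_crossingEdges.mpr ⟨hS₂, by rwa [inter_comm], hS₂T', by rwa [inter_comm S₂ S₁]⟩
    rcases (pair_eq_pair_iff (α := Finset V)).mp (hb.symm.trans h₁) with
      ⟨rfl, rfl⟩ | ⟨rfl, rfl⟩
    · exact ⟨S₂, hS₂, Or.inl h₂⟩
    · exact ⟨S₂, by rwa [crossingEdges_comm], Or.inr h₂⟩
  · rintro ⟨A, hA, h⟩
    have hAb : A ∉ b.1 := by simpa [hb] using ne_of_mem_crossingEdges hST hA
    have hAb' : A ∈ b'.1 := by rcases h with h | h <;> simp [h]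
    obtain ⟨-, hAS, hAT, hempty⟩ := mem_crossingEdges.mp hA
    refine ⟨fun hbb' => hAb (hbb' ▸ hAb'), ?_⟩
    rcases h with h | h
    · exact ⟨S, A, T, hb, h, by rwa [inter_comm], by rwa [inter_comm S A]⟩
    · refine ⟨T, A, S, hb.trans (pair_comm S T), h, by rwa [inter_comm], ?_⟩
      rwa [inter_comm T A, inter_right_comm]

theorem degree_bowtieGraph [Fintype V] {b : {b // IsBowtie 𝒢 b}} (hb : b.1 = {S, T}) :
    (bowtieGraph 𝒢).degree b = 2 * #(crossingEdges 𝒢 S T) := by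
  obtain ⟨hS, hT, hne, hcard⟩ := isBowtie_pair_iff.mp (hb ▸ b.2)
  have hST : (S ∩ T).Nonempty := card_pos.mp (by omega)
  set N := crossingEdges 𝒢 S T
  have himage : ((bowtieGraph 𝒢).neighborFinset b).map (Function.Embedding.subtype _) =
      N.image (fun A => {A, T}) ∪ N.image (fun A => {A, S}) := by
    ext x
    simp only [mem_map, mem_union, mem_image, SimpleGraph.mem_neighborFinset,
      bowtieGraph_adj_iff hb hST, Function.Embedding.coe_subtype]
    constructor
    · rintro ⟨b', ⟨A, hA, h | h⟩, rfl⟩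
      exacts [Or.inl ⟨A, hA, h.symm⟩, Or.inr ⟨A, hA, h.symm⟩]
    · rintro (⟨A, hA, rfl⟩ | ⟨A, hA, rfl⟩)
      · exact ⟨⟨_, isBowtie_of_mem_crossingEdges hT hST hA⟩, ⟨A, hA, Or.inl rfl⟩, rfl⟩
      · have hA' : A ∈ crossingEdges 𝒢 T S := by rwa [crossingEdges_comm]
        exact ⟨⟨_, isBowtie_of_mem_crossingEdges hS (by rwa [inter_comm]) hA'⟩,
          ⟨A, hA, Or.inr rfl⟩, rfl⟩
  have hinj : ∀ X, (∀ A ∈ N, A ≠ X) → Set.InjOn (fun A => ({A, X} : Finset (Finset V))) N := by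
    intro X hX A hA A' _ h
    rcases pair_eq_pair_iff.mp h with ⟨h, -⟩ | ⟨h, -⟩
    exacts [h, absurd h (hX A hA)]
  have hdisj : Disjoint (N.image fun A => ({A, T} : Finset (Finset V)))
      (N.image fun A => {A, S}) := by
    simp only [disjoint_left, mem_image]
    rintro _ ⟨A, hA, rfl⟩ ⟨A', hA', h⟩
    have := ne_of_mem_crossingEdges hST hA
    simp_all [pair_eq_pair_iff, eq_comm]
  rw [← SimpleGraph.card_neighborFinset_eq_degree, ← card_map, himage,
    card_union_of_disjoint hdisj,
    card_image_of_injOn (hinj T fun A hA => (ne_of_mem_crossingEdges hST hA).2),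
    card_image_of_injOn (hinj S fun A hA => (ne_of_mem_crossingEdges hST hA).1), two_mul]

theorem card_crossingEdges_le (hlin : Linear 𝒢) (hST : #(S ∩ T) = 1) :
    #(crossingEdges 𝒢 S T) ≤ (#S - 1) * (#T - 1) := by
  have hmaps : ∀ A ∈ crossingEdges 𝒢 S T,
      (A ∩ S, A ∩ T) ∈ (S \ T).powersetCard 1 ×ˢ (T \ S).powersetCard 1 := by
    intro A hA
    obtain ⟨-, hAS, hAT, hempty⟩ := mem_crossingEdges.mp hA
    have hempty := eq_empty_iff_forall_notMem.mp hempty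
    simp only [mem_product, mem_powersetCard, subset_iff, mem_inter, mem_sdiff]
    refine ⟨⟨fun x hx => ⟨hx.2, fun hxT => ?_⟩, hAS⟩, ⟨fun x hx => ⟨hx.2, fun hxS => ?_⟩, hAT⟩⟩
    exacts [hempty x (mem_inter.mpr ⟨mem_inter.mpr hx, hxT⟩),
      hempty x (mem_inter.mpr ⟨mem_inter.mpr ⟨hx.1, hxS⟩, hx.2⟩)]
  have hinj : Set.InjOn (fun A => (A ∩ S, A ∩ T)) (crossingEdges 𝒢 S T) := by
    intro A hA A' hA' h
    obtain ⟨hA𝒢, hAS, hAT, hempty⟩ := mem_crossingEdges.mp hA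
    obtain ⟨hAS', hAT'⟩ := Prod.mk.inj h
    have hdisj : Disjoint (A ∩ S) (A ∩ T) := by
      rwa [disjoint_iff_inter_eq_empty, ← inter_inter_distrib_left, ← inter_assoc]
    have hsub : A ∩ S ∪ A ∩ T ⊆ A ∩ A' :=
      union_subset (subset_inter inter_subset_left (hAS'.trans_subset inter_subset_left))
        (subset_inter inter_subset_left (hAT'.trans_subset inter_subset_left))
    refine hlin.eq_of_one_lt_card_inter hA𝒢 (mem_crossingEdges.mp hA').1 ?_
    calc 1 < #(A ∩ S ∪ A ∩ T) := by rw [card_union_of_disjoint hdisj, hAS, hAT]; norm_num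
      _ ≤ #(A ∩ A') := card_le_card hsub
  calc #(crossingEdges 𝒢 S T)
      ≤ #((S \ T).powersetCard 1 ×ˢ (T \ S).powersetCard 1) :=
        card_le_card_of_injOn _ hmaps hinj
    _ = (#S - 1) * (#T - 1) := by simp [card_sdiff, hST, inter_comm T S]

end

theorem stmt_8_general {V : Type*} [Fintype V] [DecidableEq V] (r : ℕ)
    (𝒢 : Finset (Finset V)) (hlin : Linear 𝒢) (hunif : Uniform r 𝒢)
    (b : {b : Finset (Finset V) // IsBowtie 𝒢 b}) :
    Even ((bowtieGraph 𝒢).degree b) ∧ (bowtieGraph 𝒢).degree b ≤ 2 * (r - 1) ^ 2 := by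
  obtain ⟨S, T, hS, hT, -, hST, hb⟩ := b.2
  rw [degree_bowtieGraph hb]
  refine ⟨even_two_mul _, ?_⟩
  calc 2 * (crossingEdges 𝒢 S T).card ≤ 2 * ((S.card - 1) * (T.card - 1)) :=
        Nat.mul_le_mul_left 2 (card_crossingEdges_le hlin hST)
    _ = 2 * (r - 1) ^ 2 := by rw [hunif S hS, hunif T hT, sq]

/-- In the bowtie graph of a linear `r`-graph, every degree is even and the
maximum degree is at most `2(r-1)²`. -/
theorem stmt_8 {V : Type*} [Fintype V] [DecidableEq V] (r : ℕ) (hr : 3 ≤ r)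
    (𝒢 : Finset (Finset V)) (hlin : Linear 𝒢) (hunif : Uniform r 𝒢)
    (b : {b : Finset (Finset V) // IsBowtie 𝒢 b}) :
    Even ((bowtieGraph 𝒢).degree b) ∧ (bowtieGraph 𝒢).degree b ≤ 2 * (r - 1) ^ 2 :=
  stmt_8_general r 𝒢 hlin hunif b
end

section
/- Let 𝒢 be a linear r-graph whose bowtie graph B has a connected component of size at least r^{10k²} (where k ≥ 3, r ≥ 3). Then 𝒢 contains k hyperedges spanned by at most (r-2)k + 3 vertices. -/
open scoped Classical

/-- The (finite) vertex set of a connected component of a graph. -/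
noncomputable def compSupp {V : Type*} [Fintype V] (G : SimpleGraph V)
    (c : G.ConnectedComponent) : Finset V :=
  Finset.univ.filter (fun v => G.connectedComponentMk v = c)

/-- The average degree of a connected component of a graph. -/
noncomputable def compAvgDeg {V : Type*} [Fintype V] (G : SimpleGraph V)
    (c : G.ConnectedComponent) : ℝ :=
  (∑ v ∈ compSupp G c, (G.degree v : ℝ)) / ((compSupp G c).card : ℝ)

/-
Collect the hyperedges of the bowties visited by a path in the bowtie graph. A step
`{S, T} ~ {S', T}` adds at most the one hyperedge `S`, and `S` already meets the collected
hyperedges in two vertices (one in `S'`, one in `T`, distinct since `S ∩ S' ∩ T = ∅`), so it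
brings at most `r - 2` new vertices. As a bowtie spans `2r - 1 = 2(r - 2) + 3` vertices, every
stage of the collection has `m` hyperedges on at most `(r - 2)m + 3` vertices, and the stages
grow one hyperedge at a time. The bowties of a path are distinct pairs of collected hyperedges,
so a path with more than `k²` edges collects at least `k` of them. Such a path exists: by
linearity a bowtie has at most `2 binom(2r - 1, 2) < r⁴` neighbours, so balls of radius `k²` in
the bowtie graph are smaller than `r^(10k²)`.
-/

namespace SimpleGraph

variable {V : Type*} [Fintype V] (G : SimpleGraph V) {D : ℕ}

theorem card_filter_exists_walk_length_le (hD : ∀ v, G.degree v ≤ D) (n : ℕ) (v : V) :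
    (Finset.univ.filter fun u => ∃ p : G.Walk v u, p.length ≤ n).card ≤ (D + 1) ^ n := by
  induction n generalizing v with
  | zero =>
    refine (Finset.card_le_card (t := {v}) fun u hu => ?_).trans (by simp)
    obtain ⟨p, hp⟩ := (Finset.mem_filter.mp hu).2
    simp [Walk.eq_of_length_eq_zero (Nat.le_zero.mp hp)]
  | succ n ih =>
    have hsub : (Finset.univ.filter fun u => ∃ p : G.Walk v u, p.length ≤ n + 1) ⊆
        insert v ((G.neighborFinset v).biUnion fun w =>
          Finset.univ.filter fun u => ∃ p : G.Walk w u, p.length ≤ n) := by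
      intro u hu
      obtain ⟨p, hp⟩ := (Finset.mem_filter.mp hu).2
      cases p with
      | nil => exact Finset.mem_insert_self _ _
      | @cons _ w _ h q =>
        refine Finset.mem_insert_of_mem (Finset.mem_biUnion.mpr ⟨w, ?_, ?_⟩)
        · simpa using h
        · simp only [Walk.length_cons] at hp
          exact Finset.mem_filter.mpr ⟨Finset.mem_univ _, q, by omega⟩
    calc _ ≤ _ := Finset.card_le_card hsub
      _ ≤ 1 + D * (D + 1) ^ n := by
        refine (Finset.card_insert_le _ _).trans ?_
        rw [add_comm]
        gcongr
        refine Finset.card_biUnion_le.trans ?_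
        refine (Finset.sum_le_sum fun w _ => ih w).trans ?_
        rw [Finset.sum_const, smul_eq_mul, card_neighborFinset_eq_degree]
        gcongr
        exact hD v
      _ ≤ (D + 1) ^ (n + 1) := by
        rw [pow_succ]
        nlinarith [Nat.one_le_pow n (D + 1) (Nat.succ_pos D)]

theorem exists_isPath_lt_length_of_pow_lt_card (hD : ∀ v, G.degree v ≤ D) {n : ℕ}
    {c : G.ConnectedComponent} (hc : (D + 1) ^ n < (compSupp G c).card) :
    ∃ u v, ∃ p : G.Walk u v, p.IsPath ∧ n < p.length := by
  obtain ⟨v, hv⟩ := Finset.card_pos.mp (Nat.zero_lt_of_lt hc)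
  by_contra! hshort
  refine (G.card_filter_exists_walk_length_le hD n v).not_gt (hc.trans_le ?_)
  refine Finset.card_le_card fun u hu => Finset.mem_filter.mpr ⟨Finset.mem_univ _, ?_⟩
  have hreach : G.Reachable v u := ConnectedComponent.exact
    ((Finset.mem_filter.mp hv).2.trans (Finset.mem_filter.mp hu).2.symm)
  obtain ⟨p⟩ := hreach
  exact ⟨p.bypass, hshort _ _ _ p.bypass_isPath⟩

end SimpleGraph

section Hypergraph

variable {V : Type*} [DecidableEq V] {r : ℕ} {𝒢 : Finset (Finset V)}

theorem Linear.card_filter_two_le_card_inter_le (hlin : Linear 𝒢) (X : Finset V) :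
    (𝒢.filter fun S => 2 ≤ (S ∩ X).card).card ≤ X.card.choose 2 := by
  set 𝒮 := 𝒢.filter fun S => 2 ≤ (S ∩ X).card
  have hdisj : (𝒮 : Set (Finset V)).PairwiseDisjoint fun S => (S ∩ X).powersetCard 2 := by
    intro S hS S' hS' hne
    refine Finset.disjoint_left.mpr fun P hP hP' => ?_
    rw [Finset.mem_powersetCard] at hP hP'
    have hPS : P ⊆ S ∩ S' := Finset.subset_inter
      (hP.1.trans Finset.inter_subset_left) (hP'.1.trans Finset.inter_subset_left)
    have := hlin S (Finset.mem_filter.mp hS).1 S' (Finset.mem_filter.mp hS').1 hne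
    have := Finset.card_le_card hPS
    omega
  calc 𝒮.card ≤ (𝒮.biUnion fun S => (S ∩ X).powersetCard 2).card :=
        Finset.card_le_card_biUnion hdisj fun S hS =>
          Finset.powersetCard_nonempty.mpr (Finset.mem_filter.mp hS).2
    _ ≤ (X.powersetCard 2).card := Finset.card_le_card <|
        Finset.biUnion_subset.mpr fun _ _ => Finset.powersetCard_mono Finset.inter_subset_right
    _ = X.card.choose 2 := Finset.card_powersetCard _ _

namespace IsBowtie

variable {b : Finset (Finset V)}

theorem subset (hb : IsBowtie 𝒢 b) : b ⊆ 𝒢 := by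
  obtain ⟨S, T, hS, hT, -, -, rfl⟩ := hb
  simp [Finset.insert_subset_iff, hS, hT]

theorem card_eq_two (hb : IsBowtie 𝒢 b) : b.card = 2 := by
  obtain ⟨S, T, -, -, hST, -, rfl⟩ := hb
  exact Finset.card_pair hST

theorem card_inter_eq_one (hb : IsBowtie 𝒢 b) {X Y : Finset V} (hX : X ∈ b) (hY : Y ∈ b)
    (hXY : X ≠ Y) : (X ∩ Y).card = 1 := by
  obtain ⟨S, T, -, -, -, hST, rfl⟩ := hb
  simp only [Finset.mem_insert, Finset.mem_singleton] at hX hY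
  rcases hX with rfl | rfl <;> rcases hY with rfl | rfl <;>
    first | exact absurd rfl hXY | assumption | rwa [Finset.inter_comm]

theorem card_sup_id (hb : IsBowtie 𝒢 b) (hunif : Uniform r 𝒢) :
    (b.sup id).card = 2 * r - 1 := by
  obtain ⟨S, T, hS, hT, -, hST, rfl⟩ := hb
  have := Finset.card_union_add_card_inter S T
  simp only [Finset.sup_insert, Finset.sup_singleton, id, Finset.sup_eq_union]
  rw [hunif S hS, hunif T hT, hST] at this
  omega

end IsBowtie

theorem exists_eq_pair_of_bowtieGraph_adj {b b' : {b // IsBowtie 𝒢 b}}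
    (h : (bowtieGraph 𝒢).Adj b b') :
    ∃ S ∈ 𝒢, ∃ T ∈ (b' : Finset (Finset V)), (b : Finset (Finset V)) = {S, T} ∧
      2 ≤ (S ∩ (b' : Finset (Finset V)).sup id).card := by
  obtain ⟨-, S₁, S₂, T, h₁, h₂, h₁₂, h₁₂T⟩ := h
  have hS₁ : S₁ ∈ (b : Finset (Finset V)) := by simp [h₁]
  have hT : T ∈ (b : Finset (Finset V)) := by simp [h₁]
  have hS₁T : S₁ ≠ T := by
    rintro rfl
    rw [Finset.inter_right_comm, Finset.inter_self] at h₁₂T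
    simp [h₁₂T] at h₁₂
  refine ⟨S₁, b.2.subset hS₁, T, by simp [h₂], h₁, ?_⟩
  have hdisj : S₁ ∩ S₂ ∩ (S₁ ∩ T) = ∅ := by
    rw [← h₁₂T, Finset.inter_inter_inter_comm, Finset.inter_self, ← Finset.inter_assoc]
  have := Finset.card_union_add_card_inter (S₁ ∩ S₂) (S₁ ∩ T)
  rw [hdisj, Finset.card_empty, b.2.card_inter_eq_one hS₁ hT hS₁T, h₁₂,
    ← Finset.inter_union_distrib_left] at this
  simp only [h₂, Finset.sup_insert, Finset.sup_singleton, id, Finset.sup_eq_union]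
  omega

theorem bowtieGraph_degree_le [Fintype V] (hlin : Linear 𝒢) (hunif : Uniform r 𝒢)
    (b : {b // IsBowtie 𝒢 b}) : (bowtieGraph 𝒢).degree b ≤ 2 * (2 * r - 1).choose 2 := by
  set X := (b : Finset (Finset V)).sup id
  have hsub : ((bowtieGraph 𝒢).neighborFinset b).map (Function.Embedding.subtype _) ⊆
      ((b : Finset (Finset V)) ×ˢ 𝒢.filter fun S => 2 ≤ (S ∩ X).card).image
        fun ST => {ST.2, ST.1} := by
    intro _ hmem
    obtain ⟨b', hb', rfl⟩ := Finset.mem_map.mp hmem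
    obtain ⟨S, hS, T, hT, hb'ST, hSX⟩ :=
      exists_eq_pair_of_bowtieGraph_adj (((bowtieGraph 𝒢).mem_neighborFinset b b').mp hb').symm
    exact Finset.mem_image.mpr
      ⟨(T, S), Finset.mem_product.mpr ⟨hT, Finset.mem_filter.mpr ⟨hS, hSX⟩⟩, hb'ST.symm⟩
  rw [← SimpleGraph.card_neighborFinset_eq_degree, ← Finset.card_map]
  calc _ ≤ _ := Finset.card_le_card hsub
    _ ≤ _ := Finset.card_image_le
    _ ≤ 2 * X.card.choose 2 := by
      rw [Finset.card_product, b.2.card_eq_two]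
      exact Nat.mul_le_mul_left 2 (hlin.card_filter_two_le_card_inter_le X)
    _ = 2 * (2 * r - 1).choose 2 := by rw [b.2.card_sup_id hunif]

def hyperedgesAlong {b b' : {b // IsBowtie 𝒢 b}} (p : (bowtieGraph 𝒢).Walk b b') :
    Finset (Finset V) :=
  p.support.toFinset.biUnion Subtype.val

section hyperedgesAlong

variable {b b' : {b // IsBowtie 𝒢 b}}

theorem hyperedgesAlong_subset (p : (bowtieGraph 𝒢).Walk b b') : hyperedgesAlong p ⊆ 𝒢 :=
  Finset.biUnion_subset.mpr fun b _ => b.2.subset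

theorem subset_hyperedgesAlong (p : (bowtieGraph 𝒢).Walk b b') {c : {b // IsBowtie 𝒢 b}}
    (hc : c ∈ p.support) : (c : Finset (Finset V)) ⊆ hyperedgesAlong p :=
  Finset.subset_biUnion_of_mem Subtype.val (List.mem_toFinset.mpr hc)

theorem hyperedgesAlong_nil :
    hyperedgesAlong (.nil : (bowtieGraph 𝒢).Walk b b) = (b : Finset (Finset V)) := by
  simp [hyperedgesAlong]

theorem hyperedgesAlong_cons {b'' : {b // IsBowtie 𝒢 b}} (h : (bowtieGraph 𝒢).Adj b b')
    (q : (bowtieGraph 𝒢).Walk b' b'') :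
    hyperedgesAlong (.cons h q) = (b : Finset (Finset V)) ∪ hyperedgesAlong q := by
  simp [hyperedgesAlong]

theorem exists_hyperedgesAlong_cons_eq_insert (h : (bowtieGraph 𝒢).Adj b b')
    {b'' : {b // IsBowtie 𝒢 b}} (q : (bowtieGraph 𝒢).Walk b' b'') :
    ∃ S ∈ 𝒢, hyperedgesAlong (.cons h q) = insert S (hyperedgesAlong q) ∧
      2 ≤ (S ∩ (hyperedgesAlong q).sup id).card := by
  obtain ⟨S, hS, T, hT, hb, hSX⟩ := exists_eq_pair_of_bowtieGraph_adj h
  have hb' := subset_hyperedgesAlong q q.start_mem_support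
  refine ⟨S, hS, ?_, hSX.trans (Finset.card_le_card ?_)⟩
  · rw [hyperedgesAlong_cons, hb, Finset.insert_union, Finset.singleton_union,
      Finset.insert_eq_of_mem (hb' hT)]
  · exact Finset.inter_subset_inter_left (Finset.sup_mono hb')

theorem card_sup_hyperedgesAlong_le (hunif : Uniform r 𝒢) (p : (bowtieGraph 𝒢).Walk b b') :
    ((hyperedgesAlong p).sup id).card ≤ (r - 2) * (hyperedgesAlong p).card + 3 := by
  induction p with
  | @nil b =>
    rw [hyperedgesAlong_nil, b.2.card_sup_id hunif, b.2.card_eq_two]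
    omega
  | cons h q ih =>
    obtain ⟨S, hS, heq, hSX⟩ := exists_hyperedgesAlong_cons_eq_insert h q
    rw [heq]
    by_cases hSq : S ∈ hyperedgesAlong q
    · rwa [Finset.insert_eq_of_mem hSq]
    rw [Finset.card_insert_of_notMem hSq, Finset.sup_insert, id_eq, Finset.sup_eq_union,
      mul_add]
    have := Finset.card_union_add_card_inter S ((hyperedgesAlong q).sup id)
    rw [hunif S hS] at this
    omega

theorem exists_subset_hyperedgesAlong (hunif : Uniform r 𝒢) (p : (bowtieGraph 𝒢).Walk b b')
    {m : ℕ} (hm₂ : 2 ≤ m) (hm : m ≤ (hyperedgesAlong p).card) :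
    ∃ 𝒦 ⊆ hyperedgesAlong p, 𝒦.card = m ∧ (𝒦.sup id).card ≤ (r - 2) * m + 3 := by
  induction p with
  | @nil b =>
    have hm : m = (hyperedgesAlong (.nil : (bowtieGraph 𝒢).Walk b b)).card := by
      rw [hyperedgesAlong_nil, b.2.card_eq_two] at *
      omega
    exact ⟨_, subset_rfl, hm.symm, hm ▸ card_sup_hyperedgesAlong_le hunif _⟩
  | cons h q ih =>
    obtain ⟨S, -, heq, -⟩ := exists_hyperedgesAlong_cons_eq_insert h q
    by_cases hmq : m ≤ (hyperedgesAlong q).card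
    · obtain ⟨𝒦, h𝒦, hcard, hsup⟩ := ih hmq
      exact ⟨𝒦, h𝒦.trans (heq ▸ Finset.subset_insert _ _), hcard, hsup⟩
    have hm' : m = (hyperedgesAlong (.cons h q)).card := by
      have := heq ▸ Finset.card_insert_le S (hyperedgesAlong q)
      omega
    exact ⟨_, subset_rfl, hm'.symm, hm' ▸ card_sup_hyperedgesAlong_le hunif _⟩

theorem SimpleGraph.Walk.IsPath.length_lt_choose_card_hyperedgesAlong
    {p : (bowtieGraph 𝒢).Walk b b'} (hp : p.IsPath) :
    p.length < (hyperedgesAlong p).card.choose 2 := by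
  have hsub : p.support.toFinset.map (Function.Embedding.subtype _) ⊆
      (hyperedgesAlong p).powersetCard 2 := by
    intro _ hmem
    obtain ⟨c, hc, rfl⟩ := Finset.mem_map.mp hmem
    exact Finset.mem_powersetCard.mpr
      ⟨subset_hyperedgesAlong p (List.mem_toFinset.mp hc), c.2.card_eq_two⟩
  have := Finset.card_le_card hsub
  rw [Finset.card_map, List.toFinset_card_of_nodup hp.support_nodup,
    SimpleGraph.Walk.length_support, Finset.card_powersetCard] at this
  omega

end hyperedgesAlong

end Hypergraph

/-- If the bowtie graph of a linear `r`-graph `𝒢` has a connected component with at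
least `r^(10k²)` vertices (`r, k ≥ 3`), then `𝒢` contains `k` hyperedges spanned by
at most `(r-2)k + 3` vertices. -/
theorem stmt_16 {V : Type*} [Fintype V] [DecidableEq V] (r k : ℕ)
    (hr : 3 ≤ r) (hk : 3 ≤ k)
    (𝒢 : Finset (Finset V)) (hlin : Linear 𝒢) (hunif : Uniform r 𝒢)
    (hcomp : ∃ c : (bowtieGraph 𝒢).ConnectedComponent,
      r ^ (10 * k ^ 2) ≤ (compSupp (bowtieGraph 𝒢) c).card) :
    ∃ 𝒦 : Finset (Finset V), 𝒦 ⊆ 𝒢 ∧ 𝒦.card = k ∧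
      (𝒦.sup id).card ≤ (r - 2) * k + 3 := by
  obtain ⟨c, hc⟩ := hcomp
  have hdeg : 2 * (2 * r - 1).choose 2 + 1 ≤ r ^ 4 := by
    have h₁ := Nat.choose_le_pow (2 * r - 1) 2
    have h₂ : (2 * r - 1) ^ 2 ≤ (2 * r) ^ 2 := Nat.pow_le_pow_left (Nat.sub_le _ _) 2
    have h₃ : 3 ^ 2 * r ^ 2 ≤ r ^ 2 * r ^ 2 := Nat.mul_le_mul_right _ (Nat.pow_le_pow_left hr 2)
    nlinarith
  have hlarge : (2 * (2 * r - 1).choose 2 + 1) ^ (k ^ 2) < (compSupp (bowtieGraph 𝒢) c).card :=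
    calc _ ≤ (r ^ 4) ^ (k ^ 2) := Nat.pow_le_pow_left hdeg _
      _ = r ^ (4 * k ^ 2) := (pow_mul r 4 (k ^ 2)).symm
      _ < r ^ (10 * k ^ 2) := Nat.pow_lt_pow_right (by omega) (by nlinarith)
      _ ≤ _ := hc
  obtain ⟨b, b', p, hp, hlen⟩ := SimpleGraph.exists_isPath_lt_length_of_pow_lt_card _
    (bowtieGraph_degree_le hlin hunif) hlarge
  have hkH : k ≤ (hyperedgesAlong p).card := by
    by_contra! hlt
    have := hp.length_lt_choose_card_hyperedgesAlong
    have := Nat.choose_le_pow (hyperedgesAlong p).card 2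
    have := Nat.pow_le_pow_left hlt.le 2
    omega
  obtain ⟨𝒦, h𝒦, hcard, hsup⟩ := exists_subset_hyperedgesAlong hunif p (by omega) hkH
  exact ⟨𝒦, h𝒦.trans (hyperedgesAlong_subset p), hcard, hsup⟩
end

section
/- Let 𝒢 be a linear r-graph (r ≥ 3) on n vertices whose bowtie graph B has at least β·n³ dense components, each of size at most r^{10k²}, where n > 2rk·r^{10k²}/β and k ≥ 3. Then there exist a vertex u₀, a hyperedge T₀ containing u₀, hyperedges T⁰₁,...,T⁰_{2rk} each containing u₀, and pairwise distinct dense components C¹,...,C^{2rk} of B such that the bowtie {T₀, T⁰_ℓ} belongs to C^ℓ for each ℓ. -/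
open scoped Classical

/-- A component of the bowtie graph is dense if its average degree is at least `3(r-1)`. -/
noncomputable def DenseComp {W : Type*} [Fintype W] (r : ℕ) (B : SimpleGraph W)
    (c : B.ConnectedComponent) : Prop :=
  (3 * (r - 1) : ℝ) ≤ compAvgDeg B c

/-!
Choose in every component of the bowtie graph one bowtie `{S, T}` and a vertex `u ∈ S ∩ T`.
The flag `(u, S)` is an incident vertex–edge pair, and a linear hypergraph on `n` vertices has
at most `n²` of them: distinct edges through `u` are told apart by a second vertex. As there are
more than `n² (2rk - 1)` dense components, `2rk` of them share a flag `(u₀, T₀)`. Their second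
edges `T` are pairwise distinct, because the bowtie `{T₀, T}` lies in exactly one component.
-/

open Finset

theorem Finset.exists_injective_fin_of_le_card {α : Type*} {s : Finset α} {m : ℕ}
    (h : m ≤ #s) : ∃ f : Fin m → α, Function.Injective f ∧ ∀ i, f i ∈ s := by
  obtain ⟨e⟩ := Function.Embedding.nonempty_of_card_le (α := Fin m) (β := s) (by simpa using h)
  exact ⟨fun i => e i, Subtype.val_injective.comp e.injective, fun i => (e i).2⟩

namespace Linear

variable {V : Type*} [Fintype V] [DecidableEq V] {𝒢 : Finset (Finset V)}

theorem card_filter_mem_le (h𝒢 : Linear 𝒢) (u : V) :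
    #{S ∈ 𝒢 | u ∈ S} ≤ Fintype.card V := by
  have hpick : ∀ S : Finset V, ∃ v, u ∈ S → v ∈ S ∧ (v = u → S = {u}) := by
    intro S
    by_cases hS : u ∈ S ∧ S ≠ {u}
    · obtain ⟨v, hv, hvu⟩ := ((nontrivial_iff_ne_singleton hS.1).mpr hS.2).exists_ne u
      exact ⟨v, fun _ => ⟨hv, fun h => absurd h hvu⟩⟩
    · exact ⟨u, fun hu => ⟨hu, fun _ => not_not.mp (not_and.mp hS hu)⟩⟩
  choose f hf using hpick
  have hinj : Set.InjOn f ({S ∈ 𝒢 | u ∈ S} : Finset _) := by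
    intro S hS S' hS' hff
    rw [mem_coe, mem_filter] at hS hS'
    obtain ⟨hvS, hvu⟩ := hf S hS.2
    obtain ⟨hvS', hvu'⟩ := hf S' hS'.2
    by_cases hv : f S = u
    · rw [hvu hv, hvu' (hff ▸ hv)]
    by_contra hne
    have : 1 < #(S ∩ S') :=
      one_lt_card.mpr ⟨u, mem_inter.mpr ⟨hS.2, hS'.2⟩, f S, mem_inter.mpr ⟨hvS, hff ▸ hvS'⟩,
        Ne.symm hv⟩
    exact absurd (h𝒢 S hS.1 S' hS'.1 hne) (by omega)
  simpa using card_le_card_of_injOn f (fun _ _ => mem_coe.mpr (mem_univ _)) hinj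

theorem card_incidences_le (h𝒢 : Linear 𝒢) :
    #(univ.sigma fun u : V => {S ∈ 𝒢 | u ∈ S}) ≤ Fintype.card V ^ 2 := by
  calc #(univ.sigma fun u : V => {S ∈ 𝒢 | u ∈ S})
      = ∑ u : V, #{S ∈ 𝒢 | u ∈ S} := card_sigma _ _
    _ ≤ ∑ _u : V, Fintype.card V := sum_le_sum fun u _ => h𝒢.card_filter_mem_le u
    _ = Fintype.card V ^ 2 := by simp [sq]

end Linear

section BowtieGraph

variable {V : Type*} [DecidableEq V] {𝒢 : Finset (Finset V)}

theorem IsBowtie.exists_mem_inter {b : Finset (Finset V)} (hb : IsBowtie 𝒢 b) :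
    ∃ (u : V) (S T : Finset V), S ∈ 𝒢 ∧ T ∈ 𝒢 ∧ S ≠ T ∧ u ∈ S ∧ u ∈ T ∧ b = {S, T} := by
  obtain ⟨S, T, hS, hT, hne, hcard, rfl⟩ := hb
  obtain ⟨u, hu⟩ := card_eq_one.mp hcard
  have hu : u ∈ S ∩ T := hu ▸ mem_singleton_self u
  exact ⟨u, S, T, hS, hT, hne, (mem_inter.mp hu).1, (mem_inter.mp hu).2, rfl⟩

theorem exists_bowtie_mem_connectedComponent (c : (bowtieGraph 𝒢).ConnectedComponent) :
    ∃ (u : V) (S T : Finset V) (b : {b // IsBowtie 𝒢 b}), S ∈ 𝒢 ∧ T ∈ 𝒢 ∧ S ≠ T ∧ u ∈ S ∧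
      u ∈ T ∧ (b : Finset (Finset V)) = {S, T} ∧ (bowtieGraph 𝒢).connectedComponentMk b = c := by
  obtain ⟨b, rfl⟩ := c.exists_rep
  obtain ⟨u, S, T, hS, hT, hne, huS, huT, hb⟩ := b.2.exists_mem_inter
  exact ⟨u, S, T, b, hS, hT, hne, huS, huT, hb, rfl⟩

theorem exists_star_of_mul_lt_card_filter [Fintype V] (h𝒢 : Linear 𝒢)
    {p : (bowtieGraph 𝒢).ConnectedComponent → Prop} {m : ℕ}
    (hp : Fintype.card V ^ 2 * (m - 1) < #{c | p c}) :
    ∃ (u₀ : V) (T₀ : Finset V), T₀ ∈ 𝒢 ∧ u₀ ∈ T₀ ∧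
      ∃ (T : Fin m → Finset V) (C : Fin m → (bowtieGraph 𝒢).ConnectedComponent),
        Function.Injective T ∧ Function.Injective C ∧
        ∀ ℓ : Fin m, T ℓ ∈ 𝒢 ∧ T ℓ ≠ T₀ ∧ u₀ ∈ T ℓ ∧ p (C ℓ) ∧
          ∃ b : {b : Finset (Finset V) // IsBowtie 𝒢 b},
            (b : Finset (Finset V)) = {T₀, T ℓ} ∧
            (bowtieGraph 𝒢).connectedComponentMk b = C ℓ := by
  choose u S T b hS hT hne huS huT hb hbc using
    exists_bowtie_mem_connectedComponent (𝒢 := 𝒢)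
  obtain ⟨⟨u₀, T₀⟩, hflag, hfiber⟩ := exists_lt_card_fiber_of_mul_lt_card_of_maps_to
    (f := fun c => (⟨u c, S c⟩ : Σ _ : V, Finset V)) (fun c _ => by simp [hS c, huS c])
    ((Nat.mul_le_mul_right _ h𝒢.card_incidences_le).trans_lt hp)
  obtain ⟨C, hCinj, hC⟩ := exists_injective_fin_of_le_card (Nat.le_of_pred_lt hfiber)
  simp only [mem_filter, mem_univ, true_and, mem_sigma, Sigma.mk.inj_iff, heq_iff_eq] at hC hflag
  refine ⟨u₀, T₀, hflag.1, hflag.2, fun ℓ => T (C ℓ), C, fun i j hij => hCinj ?_, hCinj,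
    fun ℓ => ?_⟩
  · have hij : T (C i) = T (C j) := hij
    rw [← hbc (C i), ← hbc (C j)]
    congr 1
    exact Subtype.ext (by rw [hb, hb, (hC i).2.2, (hC j).2.2, hij])
  · obtain ⟨hpC, rfl, rfl⟩ := hC ℓ
    exact ⟨hT _, (hne _).symm, huT _, hpC, b (C ℓ), hb _, hbc _⟩

end BowtieGraph

theorem stmt_17_general {V : Type*} [Fintype V] [DecidableEq V] (r k n : ℕ) (β : ℝ)
    (hβ : 0 < β)
    (𝒢 : Finset (Finset V)) (hcard : Fintype.card V = n)
    (hlin : Linear 𝒢)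
    (hn : ((2 * r * k * r ^ (10 * k ^ 2) : ℕ) : ℝ) / β < (n : ℝ))
    (hmany : β * (n : ℝ) ^ 3 ≤
      ((Finset.univ.filter (fun c : (bowtieGraph 𝒢).ConnectedComponent =>
        DenseComp r (bowtieGraph 𝒢) c)).card : ℝ)) :
    ∃ (u₀ : V) (T₀ : Finset V), T₀ ∈ 𝒢 ∧ u₀ ∈ T₀ ∧
      ∃ (T : Fin (2 * r * k) → Finset V)
        (C : Fin (2 * r * k) → (bowtieGraph 𝒢).ConnectedComponent),
        Function.Injective T ∧ Function.Injective C ∧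
        ∀ ℓ : Fin (2 * r * k), T ℓ ∈ 𝒢 ∧ T ℓ ≠ T₀ ∧ u₀ ∈ T ℓ ∧
          DenseComp r (bowtieGraph 𝒢) (C ℓ) ∧
          ∃ b : {b : Finset (Finset V) // IsBowtie 𝒢 b},
            (b : Finset (Finset V)) = {T₀, T ℓ} ∧
            (bowtieGraph 𝒢).connectedComponentMk b = C ℓ := by
  refine exists_star_of_mul_lt_card_filter hlin ?_
  have hm : 2 * r * k - 1 ≤ 2 * r * k * r ^ (10 * k ^ 2) := by
    rcases r.eq_zero_or_pos with rfl | hr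
    · simp
    · exact (Nat.sub_le _ 1).trans (Nat.le_mul_of_pos_right _ (by positivity))
  have hβn : ((2 * r * k - 1 : ℕ) : ℝ) < β * n :=
    (Nat.cast_le.mpr hm).trans_lt (((div_lt_iff₀ hβ).mp hn).trans_eq (mul_comm _ _))
  have hn0 : (0 : ℝ) < n := (div_nonneg (Nat.cast_nonneg _) hβ.le).trans_lt hn
  rw [hcard, ← Nat.cast_lt (α := ℝ)]
  calc ((n ^ 2 * (2 * r * k - 1) : ℕ) : ℝ) = (n : ℝ) ^ 2 * ((2 * r * k - 1 : ℕ) : ℝ) := by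
        push_cast; ring
    _ < (n : ℝ) ^ 2 * (β * n) := by gcongr
    _ = β * (n : ℝ) ^ 3 := by ring
    _ ≤ _ := hmany

/-- If the bowtie graph of a linear `r`-graph on `n > 2rk·r^(10k²)/β` vertices has at
least `β·n³` dense components, each of size at most `r^(10k²)`, then there are a vertex
`u₀`, a hyperedge `T₀ ∋ u₀`, `2rk` further distinct hyperedges `T⁰ℓ ∋ u₀` and pairwise
distinct dense components `Cℓ` with `{T₀, T⁰ℓ} ∈ Cℓ` for each `ℓ`. -/
theorem stmt_17 {V : Type*} [Fintype V] [DecidableEq V] (r k n : ℕ) (β : ℝ)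
    (hr : 3 ≤ r) (hk : 3 ≤ k) (hβ : 0 < β)
    (𝒢 : Finset (Finset V)) (hcard : Fintype.card V = n)
    (hlin : Linear 𝒢) (hunif : Uniform r 𝒢)
    (hn : ((2 * r * k * r ^ (10 * k ^ 2) : ℕ) : ℝ) / β < (n : ℝ))
    (hsize : ∀ c : (bowtieGraph 𝒢).ConnectedComponent,
      DenseComp r (bowtieGraph 𝒢) c → (compSupp (bowtieGraph 𝒢) c).card ≤ r ^ (10 * k ^ 2))
    (hmany : β * (n : ℝ) ^ 3 ≤
      ((Finset.univ.filter (fun c : (bowtieGraph 𝒢).ConnectedComponent =>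
        DenseComp r (bowtieGraph 𝒢) c)).card : ℝ)) :
    ∃ (u₀ : V) (T₀ : Finset V), T₀ ∈ 𝒢 ∧ u₀ ∈ T₀ ∧
      ∃ (T : Fin (2 * r * k) → Finset V)
        (C : Fin (2 * r * k) → (bowtieGraph 𝒢).ConnectedComponent),
        Function.Injective T ∧ Function.Injective C ∧
        ∀ ℓ : Fin (2 * r * k), T ℓ ∈ 𝒢 ∧ T ℓ ≠ T₀ ∧ u₀ ∈ T ℓ ∧
          DenseComp r (bowtieGraph 𝒢) (C ℓ) ∧
          ∃ b : {b : Finset (Finset V) // IsBowtie 𝒢 b},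
            (b : Finset (Finset V)) = {T₀, T ℓ} ∧
            (bowtieGraph 𝒢).connectedComponentMk b = C ℓ :=
  stmt_17_general r k n β hβ 𝒢 hcard hlin hn hmany
end
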